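/- arXiv:2601.21559 — 5 statements merged into one kernel-verified Lean document; each statement's English description precedes it below -/
import Mathlib

section
/- Let R = K[x] and P_n the two-term complex R --x^n--> R in degrees -1, 0. For positive integers m, n, the set {x^i_{m,n} : max(0, n-m) ≤ i < n} is a K-basis of the Hom space Hom_{K^b(proj R)}(P_m, P_n), where x^i_{m,n} is the chain map given by multiplication by x^{i+m-n} in degree -1 and x^i in degree 0. -/
/- Setup: `R = K[x]`, the two-term cochain complexes `P n = (R --x^n--> R)` in degrees
`-1, 0`, and the morphisms `x^i_{m,n}` and `y^i_{m,n}` in the bounded homotopy category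
`K^b(proj R)` (realized inside the homotopy category of cochain complexes of
`R`-modules). -/

noncomputable section
open CategoryTheory CategoryTheory.Limits Polynomial ZeroObject CategoryTheory.Pretriangulated

variable (K : Type) [Field K]

abbrev RMod := ModuleCat.of (Polynomial K) (Polynomial K)

/-- Multiplication by `x^a` on `R = K[x]`. -/
def mulX (a : ℕ) : RMod K ⟶ RMod K :=
  ModuleCat.ofHom (LinearMap.mulLeft (Polynomial K) ((X : Polynomial K) ^ a))

lemma mulX_comp (a b : ℕ) : mulX K a ≫ mulX K b = mulX K (a + b) := by
  dsimp [mulX]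
  rw [show ((X : Polynomial K) ^ (a + b)) = X ^ b * X ^ a by
        rw [← pow_add, add_comm],
      LinearMap.mulLeft_mul]
  rfl

/-- The graded pieces of the two-term complexes `P n`. -/
def Pobj : ℤ → ModuleCat (Polynomial K) := fun i =>
  if i = -1 ∨ i = 0 then RMod K else ModuleCat.of (Polynomial K) PUnit

lemma PobjNeg : Pobj K (-1) = RMod K := by simp [Pobj]
lemma PobjZero : Pobj K 0 = RMod K := by simp [Pobj]

/-- The differential of `P n`. -/
def Pd (n : ℕ) : ∀ i : ℤ, Pobj K i ⟶ Pobj K (i + 1) := fun i =>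
  if h : i = -1 then
    eqToHom (by rw [h, PobjNeg]) ≫ mulX K n ≫ eqToHom (by rw [h]; norm_num [PobjZero])
  else 0

/-- The two-term complex `P n = (R --x^n--> R)` in degrees `-1, 0`. -/
def P (n : ℕ) : CochainComplex (ModuleCat (Polynomial K)) ℤ :=
  CochainComplex.of (Pobj K) (Pd K n) (fun i => by
    by_cases h : i = -1
    · have h2 : Pd K n (i + 1) = 0 := dif_neg (by omega)
      rw [h2, Limits.comp_zero]
    · have h1 : Pd K n i = 0 := dif_neg h
      rw [h1, Limits.zero_comp])

lemma P_d_eq_zero (n : ℕ) (i j : ℤ) (hi : i ≠ -1) : (P K n).d i j = 0 := by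
  by_cases h : i + 1 = j
  · subst h
    show CochainComplex.of.d (Pobj K) (Pd K n) i (i + 1) = 0
    rw [CochainComplex.of_d]
    exact dif_neg hi
  · exact HomologicalComplex.shape _ _ _ (by simpa using h)

/-- The components of the chain map which is multiplication by `x^a` in degree `-1`
and by `x^b` in degree `0`. -/
def xComp (a b : ℕ) : ∀ i : ℤ, Pobj K i ⟶ Pobj K i := fun i =>
  if h : i = -1 then eqToHom (by rw [h, PobjNeg]) ≫ mulX K a ≫ eqToHom (by rw [h, PobjNeg])
  else if h0 : i = 0 then
    eqToHom (by rw [h0, PobjZero]) ≫ mulX K b ≫ eqToHom (by rw [h0, PobjZero])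
  else 0

/-- The chain map `P m ⟶ P n` which is multiplication by `x^a` in degree `-1` and by
`x^b` in degree `0`; it commutes with the differentials since `a + n = b + m`. -/
def xMap (m n a b : ℕ) (hab : a + n = b + m) : P K m ⟶ P K n :=
  CochainComplex.ofHom (xComp K a b) (by
    intro i
    change xComp K a b i ≫ CochainComplex.of.d (Pobj K) (Pd K n) i (i + 1) =
      CochainComplex.of.d (Pobj K) (Pd K m) i (i + 1) ≫ xComp K a b (i + 1)
    rw [CochainComplex.of_d, CochainComplex.of_d]
    by_cases hi : i = -1
    · subst hi
      show xComp K a b (-1) ≫ Pd K n (-1) = Pd K m (-1) ≫ xComp K a b (-1 + 1)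
      rw [show xComp K a b (-1 + 1) = xComp K a b 0 from rfl]
      rw [show xComp K a b (-1) = eqToHom (PobjNeg K) ≫ mulX K a ≫ eqToHom (PobjNeg K).symm
          from dif_pos rfl]
      rw [show xComp K a b 0 = eqToHom (PobjZero K) ≫ mulX K b ≫ eqToHom (PobjZero K).symm
          from by rw [xComp, dif_neg (by norm_num), dif_pos rfl]]
      rw [show Pd K n (-1) = eqToHom (PobjNeg K) ≫ mulX K n ≫
            eqToHom (by norm_num [PobjZero] : RMod K = Pobj K (-1 + 1))
          from dif_pos rfl]
      rw [show Pd K m (-1) = eqToHom (PobjNeg K) ≫ mulX K m ≫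
            eqToHom (by norm_num [PobjZero] : RMod K = Pobj K (-1 + 1))
          from dif_pos rfl]
      simp only [Category.assoc, eqToHom_trans_assoc, eqToHom_refl, Category.id_comp]
      try simp only [Category.comp_id]
      rw [← Category.assoc (mulX K a), mulX_comp, ← Category.assoc (mulX K m), mulX_comp, hab,
        Nat.add_comm b m]
      try rfl
    · have h1 : Pd K m i = 0 := dif_neg hi
      have h2 : Pd K n i = 0 := dif_neg hi
      rw [h1, h2, Limits.comp_zero, Limits.zero_comp])

/-- The components of `y^i_{m,n}`. -/
def yComp (m n a : ℕ) : ∀ i : ℤ, (P K m).X i ⟶ ((P K n)⟦(1 : ℤ)⟧).X i := fun i =>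
  if h : i = -1 then
    eqToHom (by rw [h]; exact PobjNeg K) ≫ mulX K a ≫
      eqToHom (by rw [h]; show RMod K = Pobj K (-1 + 1); norm_num [PobjZero])
  else 0

/-- The chain map `P m ⟶ (P n)⟦1⟧` whose only nonzero component is multiplication by
`x^a` in degree `-1` (landing in the degree `0` part of `P n`). -/
def yMap (m n a : ℕ) : P K m ⟶ (P K n)⟦(1 : ℤ)⟧ where
  f := yComp K m n a
  comm' := fun i j hij => by
    have hj : i + 1 = j := hij
    have hY : ∀ i' j' : ℤ, i' ≠ -2 → ((P K n)⟦(1 : ℤ)⟧).d i' j' = 0 := fun i' j' h => by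
      rw [CochainComplex.shiftFunctor_obj_d',
        P_d_eq_zero K n _ _ (by change i' + 1 ≠ -1; omega), smul_zero]; rfl
    by_cases hi : i = -1
    · rw [hY i j (by omega), Limits.comp_zero,
        show yComp K m n a j = 0 from dif_neg (by omega), Limits.comp_zero]
    · rw [show yComp K m n a i = 0 from dif_neg hi, Limits.zero_comp]
      by_cases hj' : j = -1
      · rw [P_d_eq_zero K m i j hi, Limits.zero_comp]
      · rw [show yComp K m n a j = 0 from dif_neg hj', Limits.comp_zero]

/-- The homotopy category of cochain complexes of `K[x]`-modules, in which the bounded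
homotopy category of finitely generated projectives embeds fully faithfully. -/
abbrev KbT := HomotopyCategory (ModuleCat (Polynomial K)) (ComplexShape.up ℤ)

abbrev Q : CochainComplex (ModuleCat (Polynomial K)) ℤ ⥤ KbT K :=
  HomotopyCategory.quotient _ _

/-- `P n` as an object of the homotopy category. -/
abbrev Pbar (n : ℕ) : KbT K := (Q K).obj (P K n)

/-- The morphism `x^i_{m,n} : P m ⟶ P n` in the homotopy category, defined for
`max (0, n - m) ≤ i` (expressed with truncated subtraction on `ℕ`); in degree `-1` it is
multiplication by `x^(i+m-n)` and in degree `0` multiplication by `x^i`. -/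
def xbar (m n i : ℕ) (h : n - m ≤ i) : Pbar K m ⟶ Pbar K n :=
  (Q K).map (xMap K m n (i + m - n) i (by omega))

/-- The identification `Q(P n ⟦1⟧) ≅ (Q (P n))⟦1⟧` in the homotopy category. -/
def shIso (n : ℕ) : (Q K).obj ((P K n)⟦(1 : ℤ)⟧) ≅ (Pbar K n)⟦(1 : ℤ)⟧ :=
  ((Q K).commShiftIso (1 : ℤ)).app (P K n)

/-- The morphism `y^i_{m,n} : P m ⟶ (P n)[1]` in the homotopy category, defined for
`i ≤ m`; its only nonzero component is multiplication by `x^(m-i)` in degree `-1`. -/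
def ybar (m n i : ℕ) (_h : i ≤ m) : Pbar K m ⟶ (Pbar K n)⟦(1 : ℤ)⟧ :=
  (Q K).map (yMap K m n (m - i)) ≫ (shIso K n).hom

/-
A chain map `f : P m ⟶ P n` is multiplication by polynomials `a` in degree `-1` and `b` in
degree `0` with `x^n a = x^m b`, so it is determined by `b`, and `b` is a multiple of
`x^(n-m)`. A homotopy is a single map from degree `0` to degree `-1`, i.e. a polynomial `q`,
and `f` is null-homotopic exactly when `b = x^n q`. Hence `b ↦ b mod x^n` identifies
`Hom(P m, P n)` with `x^(n-m) K[x] / x^n K[x]`, and `x^i_{m,n}` goes to the class of `x^i`.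
-/

lemma ModuleCat.hom_apply_eq_mul_hom_one {R : Type*} [CommRing R]
    (g : ModuleCat.of R R ⟶ ModuleCat.of R R) (r : R) : g.hom r = r * g.hom 1 := by
  simpa using g.hom.map_smul r 1

lemma Polynomial.coeff_sum_smul_X_pow {R : Type*} [Semiring R] {p : ℕ → Prop}
    [DecidablePred p] [Fintype (Subtype p)] (c : Subtype p → R) (d : ℕ) :
    (∑ i, c i • X ^ (i : ℕ)).coeff d = if h : p d then c ⟨d, h⟩ else 0 := by
  simp only [finsetSum_coeff, coeff_smul, coeff_X_pow, smul_eq_mul, mul_ite, mul_one, mul_zero]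
  split_ifs with h
  · rw [Fintype.sum_eq_single ⟨d, h⟩ fun i hi => if_neg fun h' => hi (Subtype.ext h'.symm)]
    simp
  · exact Finset.sum_eq_zero fun i _ => if_neg fun h' : d = i => h (h' ▸ i.2)

instance (m n : ℕ) : Fintype {i : ℕ // n - m ≤ i ∧ i < n} :=
  inferInstanceAs (Fintype (Set.Ico (n - m) n))

section

variable {K} {m n : ℕ}

namespace P

lemma isZero_X {i : ℤ} (h₁ : i ≠ -1) (h₀ : i ≠ 0) : IsZero ((P K n).X i) := by
  have : (P K n).X i = ModuleCat.of K[X] PUnit := if_neg (by omega)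
  rw [this]
  exact ModuleCat.isZero_of_subsingleton _

def deg0 (f : P K m ⟶ P K n) : RMod K ⟶ RMod K := f.f 0

-- As a plain term, `f.f (-1)` is not recognised as a map `RMod K ⟶ RMod K`.
def degNeg1 (f : P K m ⟶ P K n) : RMod K ⟶ RMod K := by exact f.f (-1)

def poly0 : (P K m ⟶ P K n) →ₗ[K] K[X] where
  toFun f := (deg0 f).hom 1
  map_add' _ _ := rfl
  map_smul' c f := by
    simp only [RingHom.id_apply, Polynomial.smul_eq_C_mul]
    rfl

lemma poly0_apply (f : P K m ⟶ P K n) : poly0 f = (deg0 f).hom 1 := rfl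

lemma poly0_xMap (a b : ℕ) (hab : a + n = b + m) : poly0 (xMap K m n a b hab) = X ^ b :=
  mul_one _

lemma X_pow_mul_degNeg1 (f : P K m ⟶ P K n) :
    X ^ n * (degNeg1 f).hom 1 = X ^ m * poly0 f := by
  have h : degNeg1 f ≫ mulX K n = mulX K m ≫ deg0 f := f.comm (-1) 0
  calc X ^ n * (degNeg1 f).hom 1 = (degNeg1 f ≫ mulX K n).hom 1 := rfl
    _ = (mulX K m ≫ deg0 f).hom 1 := by rw [h]
    _ = (deg0 f).hom (X ^ m * 1) := rfl
    _ = X ^ m * poly0 f := by rw [ModuleCat.hom_apply_eq_mul_hom_one, mul_one, poly0_apply]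

lemma X_pow_tsub_dvd_poly0 (f : P K m ⟶ P K n) : X ^ (n - m) ∣ poly0 f := by
  rcases le_total n m with hnm | hmn
  · simp [Nat.sub_eq_zero_of_le hnm]
  · have h : X ^ m * X ^ (n - m) ∣ X ^ m * poly0 f := by
      rw [← pow_add, Nat.add_sub_cancel' hmn, ← X_pow_mul_degNeg1]
      exact dvd_mul_right _ _
    exact (mul_dvd_mul_iff_left (pow_ne_zero m X_ne_zero)).mp h

lemma hom_ext {f g : P K m ⟶ P K n} (h : poly0 f = poly0 g) : f = g := by
  have h₁ : (degNeg1 f).hom 1 = (degNeg1 g).hom 1 := by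
    refine mul_left_cancel₀ (pow_ne_zero n (X_ne_zero (R := K))) ?_
    rw [X_pow_mul_degNeg1, X_pow_mul_degNeg1, h]
  ext1 i
  by_cases hi₁ : i = -1
  · subst hi₁
    exact (ModuleCat.hom_ext (LinearMap.ext_ring h₁) : degNeg1 f = degNeg1 g)
  by_cases hi₀ : i = 0
  · subst hi₀
    exact (ModuleCat.hom_ext (LinearMap.ext_ring h) : deg0 f = deg0 g)
  exact (isZero_X hi₁ hi₀).eq_of_tgt _ _

lemma X_pow_dvd_poly0_sub_of_homotopy {f g : P K m ⟶ P K n} (H : Homotopy f g) :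
    X ^ n ∣ poly0 f - poly0 g := by
  have h := H.comm 0
  rw [dNext_eq H.hom (by simp : (ComplexShape.up ℤ).Rel 0 1),
    prevD_eq H.hom (by simp : (ComplexShape.up ℤ).Rel (-1) 0),
    P_d_eq_zero K m 0 1 (by norm_num), Limits.zero_comp, zero_add] at h
  let φ : RMod K ⟶ RMod K := by exact H.hom 0 (-1)
  have h' : deg0 f = φ ≫ mulX K n + deg0 g := h
  refine ⟨φ.hom 1, ?_⟩
  rw [poly0_apply, poly0_apply, h', sub_eq_iff_eq_add]
  rfl

def nullHomotopyHom (q : K[X]) (i j : ℤ) : (P K m).X i ⟶ (P K n).X j :=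
  if h : i = 0 ∧ j = -1 then q • eqToHom (by rw [h.1, h.2]; rfl) else 0

lemma poly0_nullHomotopicMap (q : K[X]) :
    poly0 (Homotopy.nullHomotopicMap' (fun i j _ => nullHomotopyHom (m := m) (n := n) q i j)) =
      X ^ n * q := by
  rw [poly0_apply, deg0, Homotopy.nullHomotopicMap'_f (by simp : (ComplexShape.up ℤ).Rel (-1) 0)
    (by simp : (ComplexShape.up ℤ).Rel 0 1), P_d_eq_zero K m 0 1 (by norm_num), Limits.zero_comp,
    zero_add, nullHomotopyHom, dif_pos ⟨rfl, rfl⟩]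
  change ((q • 𝟙 (RMod K)) ≫ mulX K n).hom 1 = _
  simp [mulX, mul_comm]

lemma nonempty_homotopy_zero_of_X_pow_dvd {f : P K m ⟶ P K n} (h : X ^ n ∣ poly0 f) :
    Nonempty (Homotopy f 0) := by
  obtain ⟨q, hq⟩ := h
  rw [hom_ext (f := f) (g := Homotopy.nullHomotopicMap' fun i j _ => nullHomotopyHom q i j)
    (by rw [hq, poly0_nullHomotopicMap])]
  exact ⟨Homotopy.nullHomotopy' _⟩

lemma map_eq_map_iff (f g : P K m ⟶ P K n) :
    (Q K).map f = (Q K).map g ↔ X ^ n ∣ poly0 f - poly0 g := by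
  refine ⟨fun h => X_pow_dvd_poly0_sub_of_homotopy (HomotopyCategory.homotopyOfEq _ _ h),
    fun h => ?_⟩
  rw [← map_sub] at h
  obtain ⟨H⟩ := nonempty_homotopy_zero_of_X_pow_dvd h
  exact HomotopyCategory.eq_of_homotopy _ _ (Homotopy.equivSubZero.symm H)

def xHom (i : {i : ℕ // n - m ≤ i ∧ i < n}) : P K m ⟶ P K n :=
  xMap K m n (i + m - n) i (by omega)

lemma map_sum_smul_xHom (c : {i : ℕ // n - m ≤ i ∧ i < n} → K) :
    (Q K).map (∑ i, c i • xHom i) = ∑ i, c i • xbar K m n i i.2.1 := by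
  simp only [Functor.map_sum, Functor.map_smul]
  rfl

lemma poly0_sum_smul_xHom (c : {i : ℕ // n - m ≤ i ∧ i < n} → K) :
    poly0 (∑ i, c i • xHom (K := K) i) = ∑ i, c i • X ^ (i : ℕ) := by
  simp only [map_sum, map_smul, xHom, poly0_xMap]

lemma linearIndependent_xbar :
    LinearIndependent K fun i : {i : ℕ // n - m ≤ i ∧ i < n} => xbar K m n i i.2.1 := by
  rw [Fintype.linearIndependent_iff]
  intro c hc i
  have hdvd : (X : K[X]) ^ n ∣ ∑ j, c j • X ^ (j : ℕ) := by
    rw [← poly0_sum_smul_xHom, ← sub_zero (poly0 _), ← map_zero poly0, ← map_eq_map_iff,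
      map_sum_smul_xHom, hc, Functor.map_zero]
  simpa only [coeff_sum_smul_X_pow, dif_pos i.2] using X_pow_dvd_iff.mp hdvd i i.2.2

lemma span_xbar :
    ⊤ ≤ Submodule.span K
      (Set.range fun i : {i : ℕ // n - m ≤ i ∧ i < n} => xbar K m n i i.2.1) := by
  rintro e -
  obtain ⟨f, rfl⟩ := (Q K).map_surjective e
  rw [Submodule.mem_span_range_iff_exists_fun]
  refine ⟨fun i => (poly0 f).coeff i, ?_⟩
  rw [eq_comm, ← map_sum_smul_xHom, map_eq_map_iff, poly0_sum_smul_xHom, X_pow_dvd_iff]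
  intro d hd
  rw [coeff_sub, coeff_sum_smul_X_pow]
  split_ifs with h
  · exact sub_self _
  · rw [sub_zero]
    exact X_pow_dvd_iff.mp (X_pow_tsub_dvd_poly0 f) d (by omega)

end P

end

theorem xbar_basis (m n : ℕ) :
    ∃ b : Module.Basis {i : ℕ // n - m ≤ i ∧ i < n} K (Pbar K m ⟶ Pbar K n),
      ∀ i : {i : ℕ // n - m ≤ i ∧ i < n}, b i = xbar K m n i.1 i.2.1 :=
  ⟨.mk P.linearIndependent_xbar P.span_xbar, Module.Basis.mk_apply _ _⟩
end
end

section
/- Let T be a triangulated category and suppose given a commutative octahedron diagram on composable morphisms f: A → B, g: B → C with h = g∘f, distinguished triangles (A,f,B,f',D,f''), (A,h,C,h',E,h''), (B,g,C,g',F,g''), (D,k,E,k',F,k'' = f'[1]∘g''), and l = h'∘g = k∘f', l' = f[1]∘h'' = g''∘k'. If ε: E → E satisfies ε² = 0, ε∘l = 0, l'∘ε = 0, h''∘ε∘k = 0, and k'∘ε∘h' = 0, then replacing k by (1+ε)∘k and k' by k'∘(1-ε) (keeping all other maps unchanged) again yields a commutative octahedron; in particular the triangle (D, (1+ε)∘k,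 E, k'∘(1-ε), F, k'') is distinguished. -/
open CategoryTheory CategoryTheory.Limits CategoryTheory.Pretriangulated

/-!
Since `ε ≫ ε = 0`, the endomorphism `𝟙 E + ε` is an automorphism of `E` with inverse `𝟙 E - ε`.
Conjugating the middle vertex of the distinguished triangle `(k, k', k'')` by it gives
`(k ≫ (𝟙 + ε), (𝟙 - ε) ≫ k', k'')`, which is therefore distinguished. The four commutativity
relations of the octahedron survive because each correction term is one of the products that
the hypotheses on `ε` make vanish.
-/

namespace CategoryTheory

namespace Preadditive

variable {C : Type*} [Category C] [Preadditive C] {X Y : C}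

def idAddIsoOfSqZero (ε : X ⟶ X) (hε : ε ≫ ε = 0) : X ≅ X where
  hom := 𝟙 X + ε
  inv := 𝟙 X - ε
  hom_inv_id := by simp [hε]
  inv_hom_id := by simp [hε]

lemma comp_id_add_eq_self {x : Y ⟶ X} {ε : X ⟶ X} (h : x ≫ ε = 0) : x ≫ (𝟙 X + ε) = x := by
  simp [h]

lemma id_sub_comp_eq_self {ε : X ⟶ X} {y : X ⟶ Y} (h : ε ≫ y = 0) : (𝟙 X - ε) ≫ y = y := by
  simp [h]

end Preadditive

variable {C : Type*} [Category C] [Preadditive C] [HasZeroObject C] [HasShift C ℤ]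
  [∀ n : ℤ, (shiftFunctor C n).Additive] [Pretriangulated C]

lemma Pretriangulated.mk_comp_hom_inv_comp_distinguished {X Y Z : C} {u : X ⟶ Y}
    {v : Y ⟶ Z} {w : Z ⟶ X⟦(1 : ℤ)⟧} (hT : Triangle.mk u v w ∈ distTriang C) {Y' : C}
    (e : Y ≅ Y') : Triangle.mk (u ≫ e.hom) (e.inv ≫ v) w ∈ distTriang C :=
  -- The ascriptions let `simp` work on `X`, `Y`, `Z` rather than on the projections of
  -- `Triangle.mk`, which it cannot rewrite through.
  isomorphic_distinguished _ hT _ <| Triangle.isoMk _ _ (Iso.refl X) e.symm (Iso.refl Z)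
    (by simp : (u ≫ e.hom) ≫ e.inv = 𝟙 X ≫ u) (by simp : (e.inv ≫ v) ≫ 𝟙 Z = e.inv ≫ v)
    (by simp : w ≫ (𝟙 X)⟦(1 : ℤ)⟧' = 𝟙 Z ≫ w)

end CategoryTheory

/-- deforming an octahedron by `ε : E ⟶ E` with `ε² = 0`, `ε ∘ l = 0`,
`l' ∘ ε = 0`, `h'' ∘ ε ∘ k = 0`, `k' ∘ ε ∘ h' = 0`: replacing `k` by `(1+ε) ∘ k` and
`k'` by `k' ∘ (1-ε)` again yields a commutative octahedron; in particular the triangle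
`(D, (1+ε)∘k, E, k'∘(1-ε), F, k'')` is distinguished. -/
theorem octahedron_deformation {T : Type*} [Category T] [Preadditive T] [HasZeroObject T]
    [HasShift T ℤ] [∀ n : ℤ, (shiftFunctor T n).Additive] [Pretriangulated T]
    {A B C D E F : T}
    (f : A ⟶ B) (g : B ⟶ C) (h : A ⟶ C) (hcomp : f ≫ g = h)
    (f' : B ⟶ D) (f'' : D ⟶ A⟦(1 : ℤ)⟧) (h' : C ⟶ E) (h'' : E ⟶ A⟦(1 : ℤ)⟧)
    (g' : C ⟶ F) (g'' : F ⟶ B⟦(1 : ℤ)⟧) (k : D ⟶ E) (k' : E ⟶ F)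
    (l : B ⟶ E) (l' : E ⟶ B⟦(1 : ℤ)⟧)
    (hT1 : Triangle.mk f f' f'' ∈ distTriang T)
    (hT2 : Triangle.mk h h' h'' ∈ distTriang T)
    (hT3 : Triangle.mk g g' g'' ∈ distTriang T)
    (hT4 : Triangle.mk k k' (g'' ≫ f'⟦(1 : ℤ)⟧') ∈ distTriang T)
    (hl₁ : l = g ≫ h') (hl₂ : l = f' ≫ k)
    (hl'₁ : l' = h'' ≫ f⟦(1 : ℤ)⟧') (hl'₂ : l' = k' ≫ g'')
    (hk₁ : k ≫ h'' = f'') (hk₂ : h' ≫ k' = g')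
    (ε : E ⟶ E) (hε2 : ε ≫ ε = 0) (hεl : l ≫ ε = 0) (hl'ε : ε ≫ l' = 0)
    (hεk : k ≫ ε ≫ h'' = 0) (hεh' : h' ≫ ε ≫ k' = 0) :
    (Triangle.mk (k ≫ (𝟙 E + ε)) ((𝟙 E - ε) ≫ k') (g'' ≫ f'⟦(1 : ℤ)⟧') ∈ distTriang T) ∧
    l = f' ≫ (k ≫ (𝟙 E + ε)) ∧
    (k ≫ (𝟙 E + ε)) ≫ h'' = f'' ∧
    h' ≫ ((𝟙 E - ε) ≫ k') = g' ∧
    l' = ((𝟙 E - ε) ≫ k') ≫ g'' := by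
  refine ⟨mk_comp_hom_inv_comp_distinguished hT4 (Preadditive.idAddIsoOfSqZero ε hε2),
    ?_, ?_, ?_, ?_⟩
  · rw [← Category.assoc, ← hl₂, Preadditive.comp_id_add_eq_self hεl]
  · simp [hεk, hk₁]
  · simp [hεh', hk₂]
  · rw [Category.assoc, ← hl'₂, Preadditive.id_sub_comp_eq_self hl'ε]
end

section
/- Let T be a triangulated category and suppose given an octahedron as in the octahedral axiom for f: A → B, g: B → C, with the standard notation (triangles on f, g, h = g∘f, and on k: D → E, plus diagonals l, l'). Suppose moreover the octahedron is good, meaning the triangles B --l--> E --(k', -h'')^T--> F ⊕ A[1] --(g'', f[1])--> B[1] and B --(g, f')^T--> C ⊕ D --(h', -k)--> E --l'--> B[1] are distinguished. If ε: E → E satisfies ε² = 0 and the compatibilities ε∘l = 0, l'∘ε = 0, h''∘ε∘k = 0, k'∘ε∘h' = 0, and if there exist nilpotent ε', ε'': E → E with ε'∘l = 0, h''∘ε' = 0, k'∘(ε' - ε) = 0, l'∘ε'' = 0, ε''∘h' = 0, (ε'' - ε)∘k = 0, then the modified octahedron with k replaced by (1+ε)∘k and k' replaced by k'∘(1-ε)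 is also good. -/
/-!
Each of the three triangles is the image of a distinguished triangle of the original
octahedron under an automorphism of `E`: `1 - ε` (with inverse `1 + ε`, as `ε² = 0`) for the
triangle on `k`, `1 - ε'` for the first good triangle and `1 + ε''` for the second, these being
invertible because `ε'` and `ε''` are nilpotent. The compatibilities imposed on `ε'` and `ε''`
say exactly that these automorphisms fix the undeformed maps of the good triangles and turn
`k'`, `k` into `(1 - ε) ≫ k'`, `k ≫ (1 + ε)`.
-/

open CategoryTheory CategoryTheory.Limits CategoryTheory.Pretriangulated

namespace CategoryTheory.Pretriangulated

variable {T : Type*} [Category T] [Preadditive T] [HasZeroObject T] [HasShift T ℤ]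
  [∀ n : ℤ, (shiftFunctor T n).Additive] [Pretriangulated T]

lemma mk_comp_hom_inv_comp_mem_distTriang₂ {X Y Y' Z : T} {u : X ⟶ Y} {v : Y ⟶ Z}
    {w : Z ⟶ X⟦(1 : ℤ)⟧} (e : Y ≅ Y') (hT : Triangle.mk u v w ∈ distTriang T) :
    Triangle.mk (u ≫ e.hom) (e.inv ≫ v) w ∈ distTriang T := by
  refine isomorphic_distinguished _ hT _ <| Triangle.isoMk _ _ (Iso.refl X) e.symm (Iso.refl Z)
    ?_ ?_ ?_ <;> simp [Triangle.mk]

lemma mk_comp_hom_inv_comp_mem_distTriang₃ {X Y Z Z' : T} {u : X ⟶ Y} {v : Y ⟶ Z}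
    {w : Z ⟶ X⟦(1 : ℤ)⟧} (e : Z ≅ Z') (hT : Triangle.mk u v w ∈ distTriang T) :
    Triangle.mk u (v ≫ e.hom) (e.inv ≫ w) ∈ distTriang T := by
  refine isomorphic_distinguished _ hT _ <| Triangle.isoMk _ _ (Iso.refl X) (Iso.refl Y) e.symm
    ?_ ?_ ?_ <;> simp [Triangle.mk]

end CategoryTheory.Pretriangulated

namespace CategoryTheory.Preadditive

variable {C : Type*} [Category C] [Preadditive C] {X : C}

def oneAddIsoOfSqZero (ε : X ⟶ X) (hε : ε ≫ ε = 0) : X ≅ X where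
  hom := 𝟙 X + ε
  inv := 𝟙 X - ε
  hom_inv_id := by simp [hε]
  inv_hom_id := by simp [hε]

lemma isIso_one_add_of_isNilpotent {ε : X ⟶ X} (hε : @IsNilpotent (End X) _ _ ε) :
    IsIso (𝟙 X + ε) :=
  (isUnit_iff_isIso _).mp hε.isUnit_one_add

lemma isIso_one_sub_of_isNilpotent {ε : X ⟶ X} (hε : @IsNilpotent (End X) _ _ ε) :
    IsIso (𝟙 X - ε) :=
  (isUnit_iff_isIso _).mp hε.isUnit_one_sub

end CategoryTheory.Preadditive

open CategoryTheory.Preadditive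

/-- if the octahedron is good and `ε, ε', ε''` are as stated, then the
octahedron deformed by `ε` (with `k` replaced by `(1+ε) ∘ k` and `k'` by `k' ∘ (1-ε)`)
is also good. -/
theorem octahedron_deformation_good {T : Type*} [Category T] [Preadditive T]
    [HasZeroObject T] [HasShift T ℤ] [∀ n : ℤ, (shiftFunctor T n).Additive]
    [Pretriangulated T] [HasBinaryBiproducts T]
    {A B C D E F : T}
    (f : A ⟶ B) (g : B ⟶ C) (h : A ⟶ C) (hcomp : f ≫ g = h)
    (f' : B ⟶ D) (f'' : D ⟶ A⟦(1 : ℤ)⟧) (h' : C ⟶ E) (h'' : E ⟶ A⟦(1 : ℤ)⟧)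
    (g' : C ⟶ F) (g'' : F ⟶ B⟦(1 : ℤ)⟧) (k : D ⟶ E) (k' : E ⟶ F)
    (l : B ⟶ E) (l' : E ⟶ B⟦(1 : ℤ)⟧)
    (hT1 : Triangle.mk f f' f'' ∈ distTriang T)
    (hT2 : Triangle.mk h h' h'' ∈ distTriang T)
    (hT3 : Triangle.mk g g' g'' ∈ distTriang T)
    (hT4 : Triangle.mk k k' (g'' ≫ f'⟦(1 : ℤ)⟧') ∈ distTriang T)
    (hl₁ : l = g ≫ h') (hl₂ : l = f' ≫ k)
    (hl'₁ : l' = h'' ≫ f⟦(1 : ℤ)⟧') (hl'₂ : l' = k' ≫ g'')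
    (hk₁ : k ≫ h'' = f'') (hk₂ : h' ≫ k' = g')
    (hgood₁ : Triangle.mk l (biprod.lift k' (-h'')) (biprod.desc g'' (f⟦(1 : ℤ)⟧'))
      ∈ distTriang T)
    (hgood₂ : Triangle.mk (biprod.lift g f') (biprod.desc h' (-k)) l' ∈ distTriang T)
    (ε : E ⟶ E) (hε2 : ε ≫ ε = 0) (hεl : l ≫ ε = 0) (hl'ε : ε ≫ l' = 0)
    (hεk : k ≫ ε ≫ h'' = 0) (hεh' : h' ≫ ε ≫ k' = 0)
    (ε' : E ⟶ E) (hε'nil : @IsNilpotent (CategoryTheory.End E) _ _ ε')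
    (hε'l : l ≫ ε' = 0) (hε'h'' : ε' ≫ h'' = 0) (hε'ε : (ε' - ε) ≫ k' = 0)
    (ε'' : E ⟶ E) (hε''nil : @IsNilpotent (CategoryTheory.End E) _ _ ε'')
    (hε''l' : ε'' ≫ l' = 0) (hε''h' : h' ≫ ε'' = 0) (hε''ε : k ≫ (ε'' - ε) = 0) :
    (Triangle.mk (k ≫ (𝟙 E + ε)) ((𝟙 E - ε) ≫ k') (g'' ≫ f'⟦(1 : ℤ)⟧')
      ∈ distTriang T) ∧
    (Triangle.mk l (biprod.lift ((𝟙 E - ε) ≫ k') (-h'')) (biprod.desc g'' (f⟦(1 : ℤ)⟧'))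
      ∈ distTriang T) ∧
    (Triangle.mk (biprod.lift g f') (biprod.desc h' (-(k ≫ (𝟙 E + ε)))) l'
      ∈ distTriang T) := by
  have := isIso_one_sub_of_isNilpotent hε'nil
  have := isIso_one_add_of_isNilpotent hε''nil
  refine ⟨mk_comp_hom_inv_comp_mem_distTriang₂ (oneAddIsoOfSqZero ε hε2) hT4, ?_, ?_⟩
  · have hl : l ≫ inv (𝟙 E - ε') = l := (IsIso.comp_inv_eq _).mpr (by simp [hε'l])
    have hk' : ε' ≫ k' = ε ≫ k' := sub_eq_zero.mp (by simpa only [sub_comp] using hε'ε)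
    have hlift :
        (𝟙 E - ε') ≫ biprod.lift k' (-h'') = biprod.lift ((𝟙 E - ε) ≫ k') (-h'') := by
      ext <;> simp [sub_comp, hk', hε'h'']
    simpa only [asIso_hom, asIso_inv, IsIso.inv_inv, Iso.symm_hom, Iso.symm_inv, hl, hlift] using
      mk_comp_hom_inv_comp_mem_distTriang₂ (asIso (𝟙 E - ε')).symm hgood₁
  · have hl' : inv (𝟙 E + ε'') ≫ l' = l' := (IsIso.inv_comp_eq _).mpr (by simp [hε''l'])
    have hk : k ≫ ε'' = k ≫ ε := sub_eq_zero.mp (by simpa only [comp_sub] using hε''ε)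
    have hdesc :
        biprod.desc h' (-k) ≫ (𝟙 E + ε'') = biprod.desc h' (-(k ≫ (𝟙 E + ε))) := by
      ext <;> simp [comp_add, hε''h', hk, add_comm]
    simpa only [asIso_hom, asIso_inv, hl', hdesc] using
      mk_comp_hom_inv_comp_mem_distTriang₃ (asIso (𝟙 E + ε'')) hgood₂
end

section
/- Let S be a K-linear triangulated category with a full and strong exceptional sequence (A, B, C) with one-dimensional Hom spaces Hom(A,B) = Kf, Hom(B,C) = Kg, Hom(A,C) = Kh, h = g∘f ≠ 0, and let D, E, F be cones of f, h, g fitting into an octahedron with standard notation. Then for distinct X, Y ∈ {A, B, C, D, E, F} and n ∈ ℤ, Hom(X, Y[n]) vanishes except in exactly the fourteen cases: Hom(A,B) = Kf, Hom(A,C) = Kh, Hom(B,C) = Kg, Hom(B,D) = Kf', Hom(B,E) = Kl, Hom(C,E) = Kh', Hom(C,F) = Kg', Hom(D,E) = Kk, Hom(D,A[1]) = Kf'', Hom(E,F) = Kk', Hom(E,A[1]) = Kh'', Hom(E,B[1]) = Kl', Hom(F,B[1]) = Kg'', Hom(F,D[1]) = Kk''; moreover each indecomposable object X[n] is exceptional.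 -/
/-!
For an exceptional pair `(X, Y)` with `Hom(X, Y)` spanned by `u ≠ 0`, the long exact Hom
sequences of the triangle `X ⟶ Y ⟶ Z ⟶ X⟦1⟧` on `u` show that `(Y, Z)` is again an exceptional
pair, that `Hom(X, Z⟦n⟧) = 0` for all `n`, and that `Hom(Z, X⟦n⟧)` vanishes except for `n = 1`,
where it is spanned by the connecting morphism. Applied to the cones `D`, `E`, `F` of `f`, `h`,
`g`, this gives the Hom spaces involving at most one cone. The remaining ones come from the same
exact sequences, with the octahedral relations `l = f' ≫ k`, `g' = h' ≫ k'`, `l' = k' ≫ g''`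
identifying the generators.
-/

open CategoryTheory CategoryTheory.Limits CategoryTheory.Pretriangulated

namespace ExceptionalOctahedron

section Shift

variable {S : Type*} [Category S] [Preadditive S]

lemma hom_eq_zero_of_iso {X Y P Q : S} (eP : P ≅ X) (eQ : Q ≅ Y)
    (hv : ∀ u : X ⟶ Y, u = 0) : ∀ u : P ⟶ Q, u = 0 := fun u => by
  simpa using eP.hom ≫= (hv (eP.inv ≫ u ≫ eQ.hom) =≫ eQ.inv)

variable [HasShift S ℤ]

lemma hom_shift_zero_iff {X Y : S} : (∀ u : X ⟶ Y⟦(0 : ℤ)⟧, u = 0) ↔ ∀ u : X ⟶ Y, u = 0 :=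
  ⟨hom_eq_zero_of_iso (Iso.refl X) ((shiftFunctorZero S ℤ).app Y).symm,
    hom_eq_zero_of_iso (Iso.refl X) ((shiftFunctorZero S ℤ).app Y)⟩

variable [∀ n : ℤ, (shiftFunctor S n).Additive]

lemma hom_shift_eq_zero {X Y : S} (hv : ∀ u : X ⟶ Y, u = 0) (a : ℤ) :
    ∀ u : X⟦a⟧ ⟶ Y⟦a⟧, u = 0 := fun u => by
  obtain ⟨v, rfl⟩ := (shiftFunctor S a).map_surjective u
  rw [hv v, Functor.map_zero]

lemma hom_eq_zero_of_iso_shift {X Y P Q : S} {m : ℤ} (hv : ∀ u : X ⟶ Y⟦m⟧, u = 0)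
    (a b : ℤ) (eP : P ≅ X⟦a⟧) (eQ : Q ≅ Y⟦b⟧) (hab : m + a = b) : ∀ u : P ⟶ Q, u = 0 :=
  hom_eq_zero_of_iso eP (eQ ≪≫ (shiftFunctorAdd' S m a b hab).app Y) (hom_shift_eq_zero hv a)

lemma hom_shift_one_eq_zero {X Y : S} {n : ℤ} (hv : ∀ u : X ⟶ Y⟦n - 1⟧, u = 0) :
    ∀ u : X⟦(1 : ℤ)⟧ ⟶ Y⟦n⟧, u = 0 :=
  hom_eq_zero_of_iso_shift hv 1 n (Iso.refl _) (Iso.refl _) (by ring)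

structure IsCyclicallyOrthogonal (X Y Z : S) : Prop where
  hom₂₁ : ∀ n : ℤ, ∀ u : Y ⟶ X⟦n⟧, u = 0
  hom₁₃ : ∀ n : ℤ, ∀ u : X ⟶ Z⟦n⟧, u = 0
  hom₃₂ : ∀ n : ℤ, ∀ u : Z ⟶ Y⟦n⟧, u = 0

namespace IsCyclicallyOrthogonal

variable {X Y Z : S}

lemma rotate (hO : IsCyclicallyOrthogonal X Y Z) : IsCyclicallyOrthogonal Y Z (X⟦(1 : ℤ)⟧) where
  hom₂₁ := hO.hom₃₂
  hom₁₃ n := hom_eq_zero_of_iso (Iso.refl Y) ((shiftFunctorAdd' S 1 n (1 + n) rfl).app X).symm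
    (hO.hom₂₁ (1 + n))
  hom₃₂ n := hom_shift_one_eq_zero (hO.hom₁₃ (n - 1))

lemma shift (hO : IsCyclicallyOrthogonal X Y Z) (a : ℤ) :
    IsCyclicallyOrthogonal (X⟦a⟧) (Y⟦a⟧) (Z⟦a⟧) where
  hom₂₁ n := hom_eq_zero_of_iso_shift (hO.hom₂₁ n) a (n + a) (Iso.refl _)
    ((shiftFunctorAdd' S a n (n + a) (add_comm a n)).app X).symm rfl
  hom₁₃ n := hom_eq_zero_of_iso_shift (hO.hom₁₃ n) a (n + a) (Iso.refl _)
    ((shiftFunctorAdd' S a n (n + a) (add_comm a n)).app Z).symm rfl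
  hom₃₂ n := hom_eq_zero_of_iso_shift (hO.hom₃₂ n) a (n + a) (Iso.refl _)
    ((shiftFunctorAdd' S a n (n + a) (add_comm a n)).app Y).symm rfl

end IsCyclicallyOrthogonal

end Shift

section Triangle

variable {S : Type*} [Category S] [Preadditive S] [HasZeroObject S] [HasShift S ℤ]
  [∀ n : ℤ, (shiftFunctor S n).Additive] [Pretriangulated S]

lemma hom_to_obj₃_shift_eq_zero (T : Triangle S) (hT : T ∈ distTriang S) {W : S} {n : ℤ}
    (h₂ : ∀ u : W ⟶ T.obj₂⟦n⟧, u = 0) (h₁ : ∀ u : W ⟶ T.obj₁⟦n + 1⟧, u = 0) :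
    ∀ u : W ⟶ T.obj₃⟦n⟧, u = 0 := fun u => by
  have hTn := Triangle.shift_distinguished T hT n
  obtain ⟨v, rfl⟩ := Triangle.coyoneda_exact₃ _ hTn u
    (hom_eq_zero_of_iso (Iso.refl W) ((shiftFunctorAdd' S n 1 (n + 1) rfl).app _).symm h₁ _)
  obtain rfl := h₂ v
  exact zero_comp

lemma hom_from_obj₃_shift_eq_zero (T : Triangle S) (hT : T ∈ distTriang S) {X : S} {n : ℤ}
    (h₂ : ∀ u : T.obj₂ ⟶ X⟦n⟧, u = 0) (h₁ : ∀ u : T.obj₁ ⟶ X⟦n - 1⟧, u = 0) :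
    ∀ u : T.obj₃ ⟶ X⟦n⟧, u = 0 := fun u => by
  obtain ⟨w, rfl⟩ := Triangle.yoneda_exact₃ _ hT u (h₂ _)
  rw [hom_shift_one_eq_zero h₁ w, comp_zero]

lemma comp_mor₂_ne_zero (T : Triangle S) (hT : T ∈ distTriang S) {W : S} {p : W ⟶ T.obj₂}
    (hp : p ≠ 0) (h₁ : ∀ u : W ⟶ T.obj₁, u = 0) : p ≫ T.mor₂ ≠ 0 := fun h0 => by
  obtain ⟨v, rfl⟩ := Triangle.coyoneda_exact₂ _ hT p h0
  exact hp (by rw [h₁ v, zero_comp])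

lemma mor₂_ne_zero (T : Triangle S) (hT : T ∈ distTriang S) (hne : ¬ IsZero T.obj₂)
    (h₁ : ∀ u : T.obj₂ ⟶ T.obj₁, u = 0) : T.mor₂ ≠ 0 := by
  simpa using comp_mor₂_ne_zero T hT (p := 𝟙 _) (fun h => hne ((IsZero.iff_id_eq_zero _).2 h)) h₁

section Linear

variable {K : Type*} [Field K] [Linear K S]

lemma exists_eq_smul_comp_mor₂ (T : Triangle S) (hT : T ∈ distTriang S)
    {W : S} {p : W ⟶ T.obj₂} (hp : ∀ v : W ⟶ T.obj₂, ∃ c : K, v = c • p)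
    (h₁ : ∀ u : W ⟶ T.obj₁⟦(1 : ℤ)⟧, u = 0) :
    ∀ u : W ⟶ T.obj₃, ∃ c : K, u = c • (p ≫ T.mor₂) := fun u => by
  obtain ⟨v, rfl⟩ := Triangle.coyoneda_exact₃ _ hT u (h₁ _)
  obtain ⟨c, rfl⟩ := hp v
  exact ⟨c, Linear.smul_comp _ _ _ _ _ _⟩

lemma exists_eq_smul_of_comp_mor₂ (T : Triangle S) (hT : T ∈ distTriang S)
    {W : S} {p : W ⟶ T.obj₂}
    (hp : ∀ v : W ⟶ T.obj₃, ∃ c : K, v = c • (p ≫ T.mor₂))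
    (h₁ : ∀ u : W ⟶ T.obj₁, u = 0) : ∀ u : W ⟶ T.obj₂, ∃ c : K, u = c • p := fun u => by
  obtain ⟨c, hc⟩ := hp (u ≫ T.mor₂)
  refine ⟨c, sub_eq_zero.mp ?_⟩
  obtain ⟨v, hv⟩ := Triangle.coyoneda_exact₂ _ hT (u - c • p)
    (by rw [Preadditive.sub_comp, hc, Linear.smul_comp, sub_self])
  rw [hv, h₁ v, zero_comp]

lemma exists_eq_smul_mor₂_comp (T : Triangle S) (hT : T ∈ distTriang S)
    {X : S} {q : T.obj₃ ⟶ X}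
    (hq : ∀ v : T.obj₃ ⟶ X, ∃ c : K, v = c • q)
    (h₁ : ∀ u : T.obj₁ ⟶ X, u = 0) : ∀ u : T.obj₂ ⟶ X, ∃ c : K, u = c • (T.mor₂ ≫ q) :=
  fun u => by
  obtain ⟨w, rfl⟩ := Triangle.yoneda_exact₂ _ hT u (h₁ _)
  obtain ⟨c, rfl⟩ := hq w
  exact ⟨c, Linear.comp_smul _ _ _ _ _ _⟩

lemma exists_eq_smul_of_mor₂_comp (T : Triangle S) (hT : T ∈ distTriang S)
    {X : S} {q : T.obj₃ ⟶ X}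
    (hq : ∀ v : T.obj₂ ⟶ X, ∃ c : K, v = c • (T.mor₂ ≫ q))
    (h₁ : ∀ u : T.obj₁⟦(1 : ℤ)⟧ ⟶ X, u = 0) : ∀ u : T.obj₃ ⟶ X, ∃ c : K, u = c • q :=
  fun u => by
  obtain ⟨c, hc⟩ := hq (T.mor₂ ≫ u)
  refine ⟨c, sub_eq_zero.mp ?_⟩
  obtain ⟨w, hw⟩ := Triangle.yoneda_exact₃ _ hT (u - c • q)
    (by rw [Preadditive.comp_sub, hc, Linear.comp_smul, sub_self])
  rw [hw, h₁ w, comp_zero]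

lemma hom_to_obj₁_eq_zero_of_generator (T : Triangle S) (hT : T ∈ distTriang S) {W : S}
    {v : W ⟶ T.obj₂} (hv : ∀ u : W ⟶ T.obj₂, ∃ c : K, u = c • v) (hne : v ≫ T.mor₂ ≠ 0)
    (h₃ : ∀ u : W ⟶ T.obj₃⟦(-1 : ℤ)⟧, u = 0) : ∀ u : W ⟶ T.obj₁, u = 0 := fun u => by
  obtain ⟨c, hc⟩ := hv (u ≫ T.mor₁)
  have hc0 : c • (v ≫ T.mor₂) = 0 := by
    rw [← Linear.smul_comp, ← hc, Category.assoc, comp_distTriang_mor_zero₁₂ _ hT, comp_zero]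
  have hu : u ≫ T.mor₁ = 0 := by rw [hc, (smul_eq_zero.mp hc0).resolve_right hne, zero_smul]
  obtain ⟨w, rfl⟩ := Triangle.coyoneda_exact₂ _ (inv_rot_of_distTriang _ hT) u hu
  obtain rfl := h₃ w
  exact zero_comp

lemma hom_from_obj₃_eq_zero_of_generator (T : Triangle S) (hT : T ∈ distTriang S) {X : S}
    {v : T.obj₂ ⟶ X} (hv : ∀ u : T.obj₂ ⟶ X, ∃ c : K, u = c • v) (hne : T.mor₁ ≫ v ≠ 0)
    (h₁ : ∀ u : T.obj₁⟦(1 : ℤ)⟧ ⟶ X, u = 0) : ∀ u : T.obj₃ ⟶ X, u = 0 := fun u => by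
  obtain ⟨c, hc⟩ := hv (T.mor₂ ≫ u)
  have hc0 : c • (T.mor₁ ≫ v) = 0 := by
    rw [← Linear.comp_smul, ← hc, ← Category.assoc, comp_distTriang_mor_zero₁₂ _ hT, zero_comp]
  obtain ⟨w, rfl⟩ := Triangle.yoneda_exact₃ _ hT u
    (by rw [hc, (smul_eq_zero.mp hc0).resolve_right hne, zero_smul])
  rw [h₁ w, comp_zero]

lemma hom_to_obj₃_shift_eq_zero_of_generator (T : Triangle S) (hT : T ∈ distTriang S) {W : S}
    {v : W ⟶ T.obj₁} (hv₁ : ∀ u : W ⟶ T.obj₁, ∃ c : K, u = c • v)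
    (hv₂ : ∀ u : W ⟶ T.obj₂, ∃ c : K, u = c • (v ≫ T.mor₁)) (hne : v ≫ T.mor₁ ≠ 0)
    (h₁ : ∀ n : ℤ, n ≠ 0 → ∀ u : W ⟶ T.obj₁⟦n⟧, u = 0)
    (h₂ : ∀ n : ℤ, n ≠ 0 → ∀ u : W ⟶ T.obj₂⟦n⟧, u = 0) :
    ∀ n : ℤ, ∀ u : W ⟶ T.obj₃⟦n⟧, u = 0 := by
  intro n
  rcases eq_or_ne n 0 with rfl | hn0
  · refine hom_shift_zero_iff.mpr fun u => ?_
    obtain ⟨c, rfl⟩ := exists_eq_smul_comp_mor₂ T hT hv₂ (h₁ 1 one_ne_zero) u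
    rw [Category.assoc, comp_distTriang_mor_zero₁₂ _ hT, comp_zero, smul_zero]
  rcases eq_or_ne n (-1) with rfl | hn1
  · exact hom_to_obj₁_eq_zero_of_generator _ (inv_rot_of_distTriang _ hT) hv₁ hne
      (h₂ (-1) (by norm_num))
  exact hom_to_obj₃_shift_eq_zero T hT (h₂ n hn0) (h₁ (n + 1) (by omega))

lemma hom_from_obj₃_shift_eq_zero_of_generator (T : Triangle S) (hT : T ∈ distTriang S) {W : S}
    {v : T.obj₂ ⟶ W} (hv₂ : ∀ u : T.obj₂ ⟶ W, ∃ c : K, u = c • v)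
    (hv₁ : ∀ u : T.obj₁ ⟶ W, ∃ c : K, u = c • (T.mor₁ ≫ v)) (hne : T.mor₁ ≫ v ≠ 0)
    (h₁ : ∀ n : ℤ, n ≠ 0 → ∀ u : T.obj₁ ⟶ W⟦n⟧, u = 0)
    (h₂ : ∀ n : ℤ, n ≠ 0 → ∀ u : T.obj₂ ⟶ W⟦n⟧, u = 0) :
    ∀ n : ℤ, ∀ u : T.obj₃ ⟶ W⟦n⟧, u = 0 := by
  intro n
  rcases eq_or_ne n 0 with rfl | hn0
  · exact hom_shift_zero_iff.mpr (hom_from_obj₃_eq_zero_of_generator T hT hv₂ hne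
      (hom_shift_zero_iff.mp (hom_shift_one_eq_zero (h₁ (0 - 1) (by norm_num)))))
  rcases eq_or_ne n 1 with rfl | hn1
  · intro u
    obtain ⟨w, rfl⟩ := Triangle.yoneda_exact₃ _ hT u (h₂ 1 one_ne_zero _)
    obtain ⟨w, rfl⟩ := (shiftFunctor S (1 : ℤ)).map_surjective w
    obtain ⟨c, rfl⟩ := hv₁ w
    rw [← Linear.comp_smul, Functor.map_comp, ← Category.assoc,
      comp_distTriang_mor_zero₃₁ _ hT, zero_comp]
  exact hom_from_obj₃_shift_eq_zero T hT (h₂ n hn0) (h₁ (n - 1) (by omega))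

end Linear

end Triangle

section Exceptional

variable (K : Type*) [Field K] {S : Type*} [Category S] [Preadditive S] [Linear K S]

def IsScalarEnd (X : S) : Prop := ∀ u : X ⟶ X, ∃ c : K, u = c • 𝟙 X

variable {K} in
lemma isScalarEnd_iff_of_iso {X Y : S} (e : X ≅ Y) : IsScalarEnd K X ↔ IsScalarEnd K Y := by
  suffices ∀ {X Y : S} (e : X ≅ Y), IsScalarEnd K X → IsScalarEnd K Y from ⟨this e, this e.symm⟩
  intro X Y e hX u
  obtain ⟨c, hc⟩ := hX (e.hom ≫ u ≫ e.inv)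
  refine ⟨c, ?_⟩
  calc u = e.inv ≫ (e.hom ≫ u ≫ e.inv) ≫ e.hom := by simp
    _ = c • 𝟙 Y := by simp [hc]

def IsHomBasis {X Y : S} (u : X ⟶ Y) : Prop := u ≠ 0 ∧ ∀ v : X ⟶ Y, ∃ c : K, v = c • u

variable [HasShift S ℤ]

structure IsExceptional (X : S) : Prop where
  not_isZero : ¬ IsZero X
  isScalarEnd : IsScalarEnd K X
  hom_shift_eq_zero : ∀ n : ℤ, n ≠ 0 → ∀ u : X ⟶ X⟦n⟧, u = 0

structure IsExceptionalPair {X Y : S} (u : X ⟶ Y) : Prop where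
  left : IsExceptional K X
  right : IsExceptional K Y
  ne_zero : u ≠ 0
  span : ∀ v : X ⟶ Y, ∃ c : K, v = c • u
  hom_shift_eq_zero : ∀ n : ℤ, n ≠ 0 → ∀ v : X ⟶ Y⟦n⟧, v = 0
  hom_shift_rev_eq_zero : ∀ n : ℤ, ∀ v : Y ⟶ X⟦n⟧, v = 0

structure IsExceptionalTriple {A B C : S} (f : A ⟶ B) (g : B ⟶ C) : Prop where
  pair₁₂ : IsExceptionalPair K f
  pair₂₃ : IsExceptionalPair K g
  pair₁₃ : IsExceptionalPair K (f ≫ g)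

variable {K}

lemma IsExceptionalPair.isHomBasis {X Y : S} {u : X ⟶ Y} (hP : IsExceptionalPair K u) :
    IsHomBasis K u :=
  ⟨hP.ne_zero, hP.span⟩

variable [∀ n : ℤ, (shiftFunctor S n).Additive]

lemma IsExceptional.shift {X : S} (hX : IsExceptional K X) (n : ℤ)
    (hE : IsScalarEnd K (X⟦n⟧)) : IsExceptional K (X⟦n⟧) where
  not_isZero h := hX.not_isZero (((shiftFunctor S (-n)).map_isZero h).of_iso
    ((shiftFunctorCompIsoId S n (-n) (add_neg_cancel n)).app X).symm)
  isScalarEnd := hE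
  hom_shift_eq_zero m hm := hom_eq_zero_of_iso_shift (hX.hom_shift_eq_zero m hm) n (m + n)
    (Iso.refl _) ((shiftFunctorAdd' S n m (m + n) (add_comm n m)).app X).symm rfl

end Exceptional

section Pretriangulated

variable {S : Type*} [Category S] [Preadditive S] [HasZeroObject S] [HasShift S ℤ]
  [∀ n : ℤ, (shiftFunctor S n).Additive] [Pretriangulated S] {K : Type*} [Field K] [Linear K S]

lemma isScalarEnd_obj₂_iff_obj₃ (T : Triangle S) (hT : T ∈ distTriang S)
    (hO : IsCyclicallyOrthogonal T.obj₁ T.obj₂ T.obj₃) :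
    IsScalarEnd K T.obj₂ ↔ IsScalarEnd K T.obj₃ := by
  constructor
  · intro h₂
    have hspan := exists_eq_smul_comp_mor₂ T hT (p := 𝟙 _) h₂ (hO.hom₂₁ 1)
    exact exists_eq_smul_of_mor₂_comp T hT (by simpa using hspan)
      (hom_shift_zero_iff.mp (hom_shift_one_eq_zero (hO.hom₁₃ (0 - 1))))
  · intro h₃
    have hspan := exists_eq_smul_mor₂_comp T hT (q := 𝟙 _) h₃
      (hom_shift_zero_iff.mp (hO.hom₁₃ 0))
    exact exists_eq_smul_of_comp_mor₂ T hT (by simpa using hspan)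
      (hom_shift_zero_iff.mp (hO.hom₂₁ 0))

lemma isScalarEnd_shift (T : Triangle S) (hT : T ∈ distTriang S)
    (hO : IsCyclicallyOrthogonal T.obj₁ T.obj₂ T.obj₃) (h₂ : IsScalarEnd K T.obj₂) (n : ℤ) :
    IsScalarEnd K (T.obj₁⟦n⟧) ∧ IsScalarEnd K (T.obj₂⟦n⟧) ∧ IsScalarEnd K (T.obj₃⟦n⟧) := by
  -- The shift functors need not be `K`-linear, so scalars on `T.obj₂⟦m⟧` are reached by walking
  -- along the rotations of `T⟦m⟧`, which link `T.obj₂⟦m⟧`, `T.obj₃⟦m⟧`, `T.obj₁⟦m + 1⟧` and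
  -- `T.obj₂⟦m + 1⟧`.
  have step : ∀ m : ℤ, (IsScalarEnd K (T.obj₂⟦m⟧) ↔ IsScalarEnd K (T.obj₃⟦m⟧)) ∧
      (IsScalarEnd K (T.obj₃⟦m⟧) ↔ IsScalarEnd K (T.obj₁⟦m + 1⟧)) ∧
      (IsScalarEnd K (T.obj₁⟦m + 1⟧) ↔ IsScalarEnd K (T.obj₂⟦m + 1⟧)) := fun m => by
    have hTm := Triangle.shift_distinguished T hT m
    have hOm := hO.shift m
    refine ⟨isScalarEnd_obj₂_iff_obj₃ _ hTm hOm, ?_, ?_⟩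
    · exact (isScalarEnd_obj₂_iff_obj₃ _ (rot_of_distTriang _ hTm) hOm.rotate).trans
        (isScalarEnd_iff_of_iso ((shiftFunctorAdd' S m 1 (m + 1) rfl).app _).symm)
    · exact (isScalarEnd_iff_of_iso ((shiftFunctorAdd' S m 1 (m + 1) rfl).app _)).trans
        ((isScalarEnd_obj₂_iff_obj₃ _ (rot_of_distTriang _ (rot_of_distTriang _ hTm))
          hOm.rotate.rotate).trans
        (isScalarEnd_iff_of_iso ((shiftFunctorAdd' S m 1 (m + 1) rfl).app _).symm))
  have h₂n : ∀ m : ℤ, IsScalarEnd K (T.obj₂⟦m⟧) := by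
    intro m
    induction m using Int.induction_on with
    | zero => exact (isScalarEnd_iff_of_iso ((shiftFunctorZero S ℤ).app _)).mpr h₂
    | succ m ih => exact (step m).2.2.mp ((step m).2.1.mp ((step m).1.mp ih))
    | pred m ih =>
      have hs := step (-(m : ℤ) - 1)
      rw [sub_add_cancel] at hs
      exact hs.1.mpr (hs.2.1.mpr (hs.2.2.mpr ih))
  have hs := step (n - 1)
  rw [sub_add_cancel] at hs
  exact ⟨hs.2.1.mp (hs.1.mp (h₂n (n - 1))), h₂n n, (step n).1.mp (h₂n n)⟩

namespace IsExceptionalPair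

variable {T : Triangle S}

lemma hom_obj₁_obj₃_shift_eq_zero (hP : IsExceptionalPair K T.mor₁) (hT : T ∈ distTriang S) :
    ∀ n : ℤ, ∀ u : T.obj₁ ⟶ T.obj₃⟦n⟧, u = 0 :=
  hom_to_obj₃_shift_eq_zero_of_generator T hT (v := 𝟙 _) hP.left.isScalarEnd
    (by simpa using hP.span) (by simpa using hP.ne_zero) hP.left.hom_shift_eq_zero
    hP.hom_shift_eq_zero

lemma hom_obj₃_obj₂_shift_eq_zero (hP : IsExceptionalPair K T.mor₁) (hT : T ∈ distTriang S) :
    ∀ n : ℤ, ∀ u : T.obj₃ ⟶ T.obj₂⟦n⟧, u = 0 :=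
  hom_from_obj₃_shift_eq_zero_of_generator T hT (v := 𝟙 _) hP.right.isScalarEnd
    (by simpa using hP.span) (by simpa using hP.ne_zero) hP.hom_shift_eq_zero
    hP.right.hom_shift_eq_zero

lemma hom_obj₃_obj₁_shift_eq_zero (hP : IsExceptionalPair K T.mor₁) (hT : T ∈ distTriang S) :
    ∀ n : ℤ, n ≠ 1 → ∀ u : T.obj₃ ⟶ T.obj₁⟦n⟧, u = 0 := fun n hn =>
  hom_from_obj₃_shift_eq_zero T hT (hP.hom_shift_rev_eq_zero n)
    (hP.left.hom_shift_eq_zero (n - 1) (by omega))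

lemma isCyclicallyOrthogonal (hP : IsExceptionalPair K T.mor₁) (hT : T ∈ distTriang S) :
    IsCyclicallyOrthogonal T.obj₁ T.obj₂ T.obj₃ :=
  ⟨hP.hom_shift_rev_eq_zero, hP.hom_obj₁_obj₃_shift_eq_zero hT, hP.hom_obj₃_obj₂_shift_eq_zero hT⟩

lemma isExceptionalPair_mor₂ (hP : IsExceptionalPair K T.mor₁) (hT : T ∈ distTriang S) :
    IsExceptionalPair K T.mor₂ := by
  have hne : T.mor₂ ≠ 0 :=
    mor₂_ne_zero T hT hP.right.not_isZero (hom_shift_zero_iff.mp (hP.hom_shift_rev_eq_zero 0))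
  have hspan : ∀ v : T.obj₂ ⟶ T.obj₃, ∃ c : K, v = c • T.mor₂ := by
    simpa using exists_eq_smul_comp_mor₂ T hT (p := 𝟙 _) hP.right.isScalarEnd
      (hP.hom_shift_rev_eq_zero 1)
  have hshift : ∀ n : ℤ, n ≠ 0 → ∀ v : T.obj₂ ⟶ T.obj₃⟦n⟧, v = 0 := fun n hn =>
    hom_to_obj₃_shift_eq_zero T hT (hP.right.hom_shift_eq_zero n hn)
      (hP.hom_shift_rev_eq_zero (n + 1))
  refine ⟨hP.right, ⟨fun h => hne (h.eq_of_tgt _ _), ?_, fun n hn => ?_⟩, hne, hspan, hshift,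
    hP.hom_obj₃_obj₂_shift_eq_zero hT⟩
  · exact exists_eq_smul_of_mor₂_comp T hT (by simpa using hspan)
      (hom_shift_zero_iff.mp (hom_shift_one_eq_zero (hP.hom_obj₁_obj₃_shift_eq_zero hT (0 - 1))))
  · exact hom_from_obj₃_shift_eq_zero T hT (hshift n hn)
      (hP.hom_obj₁_obj₃_shift_eq_zero hT (n - 1))

lemma isHomBasis_mor₃ (hP : IsExceptionalPair K T.mor₁) (hT : T ∈ distTriang S) :
    IsHomBasis K T.mor₃ := by
  have hZ := (hP.isExceptionalPair_mor₂ hT).right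
  refine ⟨mor₂_ne_zero T.rotate (rot_of_distTriang _ hT) hZ.not_isZero
    (hom_shift_zero_iff.mp (hP.hom_obj₃_obj₂_shift_eq_zero hT 0)), fun u => ?_⟩
  obtain ⟨c, hc⟩ := exists_eq_smul_comp_mor₂ T.rotate (rot_of_distTriang _ hT) (p := 𝟙 T.obj₃)
    hZ.isScalarEnd (hP.hom_obj₃_obj₂_shift_eq_zero hT 1) u
  exact ⟨c, hc.trans (congrArg _ (Category.id_comp T.mor₃))⟩

lemma isExceptional_shift (hP : IsExceptionalPair K T.mor₁) (hT : T ∈ distTriang S) (n : ℤ) :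
    IsExceptional K (T.obj₁⟦n⟧) ∧ IsExceptional K (T.obj₂⟦n⟧) ∧ IsExceptional K (T.obj₃⟦n⟧) := by
  obtain ⟨h₁, h₂, h₃⟩ :=
    isScalarEnd_shift T hT (hP.isCyclicallyOrthogonal hT) hP.right.isScalarEnd n
  exact ⟨hP.left.shift n h₁, hP.right.shift n h₂, (hP.isExceptionalPair_mor₂ hT).right.shift n h₃⟩

end IsExceptionalPair

end Pretriangulated

section Octahedron

variable {S : Type*} [Category S] [Preadditive S] [HasZeroObject S] [HasShift S ℤ]
  [∀ n : ℤ, (shiftFunctor S n).Additive] [Pretriangulated S] {K : Type*} [Field K] [Linear K S]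
  {A B C D E F : S} {f : A ⟶ B} {g : B ⟶ C} {f' : B ⟶ D} {f'' : D ⟶ A⟦(1 : ℤ)⟧}
  {h' : C ⟶ E} {h'' : E ⟶ A⟦(1 : ℤ)⟧} {g' : C ⟶ F} {g'' : F ⟶ B⟦(1 : ℤ)⟧}

namespace IsExceptionalTriple

lemma hom_obj₁_cone₂₃_shift_eq_zero (hABC : IsExceptionalTriple K f g)
    (hT₂₃ : Triangle.mk g g' g'' ∈ distTriang S) : ∀ n : ℤ, ∀ u : A ⟶ F⟦n⟧, u = 0 :=
  hom_to_obj₃_shift_eq_zero_of_generator _ hT₂₃ hABC.pair₁₂.span hABC.pair₁₃.span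
    hABC.pair₁₃.ne_zero hABC.pair₁₂.hom_shift_eq_zero hABC.pair₁₃.hom_shift_eq_zero

lemma hom_cone₁₂_obj₃_shift_eq_zero (hABC : IsExceptionalTriple K f g)
    (hT₁₂ : Triangle.mk f f' f'' ∈ distTriang S) : ∀ n : ℤ, ∀ u : D ⟶ C⟦n⟧, u = 0 :=
  hom_from_obj₃_shift_eq_zero_of_generator _ hT₁₂ hABC.pair₂₃.span hABC.pair₁₃.span
    hABC.pair₁₃.ne_zero hABC.pair₁₃.hom_shift_eq_zero hABC.pair₂₃.hom_shift_eq_zero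

lemma hom_obj₃_cone₁₂_shift_eq_zero (hABC : IsExceptionalTriple K f g)
    (hT₁₂ : Triangle.mk f f' f'' ∈ distTriang S) : ∀ n : ℤ, ∀ u : C ⟶ D⟦n⟧, u = 0 := fun n =>
  hom_to_obj₃_shift_eq_zero _ hT₁₂ (hABC.pair₂₃.hom_shift_rev_eq_zero n)
    (hABC.pair₁₃.hom_shift_rev_eq_zero (n + 1))

lemma hom_obj₂_cone₁₃_shift_eq_zero (hABC : IsExceptionalTriple K f g)
    (hT₁₃ : Triangle.mk (f ≫ g) h' h'' ∈ distTriang S) :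
    ∀ n : ℤ, n ≠ 0 → ∀ u : B ⟶ E⟦n⟧, u = 0 := fun n hn =>
  hom_to_obj₃_shift_eq_zero _ hT₁₃ (hABC.pair₂₃.hom_shift_eq_zero n hn)
    (hABC.pair₁₂.hom_shift_rev_eq_zero (n + 1))

lemma isHomBasis_obj₂_cone₁₃ (hABC : IsExceptionalTriple K f g)
    (hT₁₃ : Triangle.mk (f ≫ g) h' h'' ∈ distTriang S) : IsHomBasis K (g ≫ h') :=
  ⟨comp_mor₂_ne_zero _ hT₁₃ hABC.pair₂₃.ne_zero
    (hom_shift_zero_iff.mp (hABC.pair₁₂.hom_shift_rev_eq_zero 0)),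
    exists_eq_smul_comp_mor₂ _ hT₁₃ hABC.pair₂₃.span (hABC.pair₁₂.hom_shift_rev_eq_zero 1)⟩

lemma hom_cone₂₃_cone₁₃_shift_eq_zero (hABC : IsExceptionalTriple K f g)
    (hT₁₃ : Triangle.mk (f ≫ g) h' h'' ∈ distTriang S)
    (hT₂₃ : Triangle.mk g g' g'' ∈ distTriang S) : ∀ n : ℤ, ∀ u : F ⟶ E⟦n⟧, u = 0 :=
  have hCE := hABC.pair₁₃.isExceptionalPair_mor₂ hT₁₃
  hom_from_obj₃_shift_eq_zero_of_generator _ hT₂₃ hCE.span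
    (hABC.isHomBasis_obj₂_cone₁₃ hT₁₃).2 (hABC.isHomBasis_obj₂_cone₁₃ hT₁₃).1
    (hABC.hom_obj₂_cone₁₃_shift_eq_zero hT₁₃) hCE.hom_shift_eq_zero

lemma hom_eq_zero_of_notMem (hABC : IsExceptionalTriple K f g)
    (hT₁₂ : Triangle.mk f f' f'' ∈ distTriang S)
    (hT₁₃ : Triangle.mk (f ≫ g) h' h'' ∈ distTriang S)
    (hT₂₃ : Triangle.mk g g' g'' ∈ distTriang S) :
    ∀ (i j : Fin 6) (n : ℤ), i ≠ j →
      (i, j, n) ∉ ([((0 : Fin 6), (1 : Fin 6), (0 : ℤ)), (0, 2, 0), (1, 2, 0), (1, 3, 0),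
        (1, 4, 0), (2, 4, 0), (2, 5, 0), (3, 4, 0), (3, 0, 1), (4, 5, 0), (4, 0, 1),
        (4, 1, 1), (5, 1, 1), (5, 3, 1)] : List (Fin 6 × Fin 6 × ℤ)) →
      ∀ u : (![A, B, C, D, E, F] : Fin 6 → S) i ⟶ ((![A, B, C, D, E, F] : Fin 6 → S) j)⟦n⟧,
        u = 0 := by
  have hAF := hABC.hom_obj₁_cone₂₃_shift_eq_zero hT₂₃
  have hBE := hABC.hom_obj₂_cone₁₃_shift_eq_zero hT₁₃
  have hCD := hABC.hom_obj₃_cone₁₂_shift_eq_zero hT₁₂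
  have hDC := hABC.hom_cone₁₂_obj₃_shift_eq_zero hT₁₂
  have hFE := hABC.hom_cone₂₃_cone₁₃_shift_eq_zero hT₁₃ hT₂₃
  obtain ⟨hAB, hBC, hAC⟩ := hABC
  have hBD : IsExceptionalPair K f' := hAB.isExceptionalPair_mor₂ hT₁₂
  have hCE : IsExceptionalPair K h' := hAC.isExceptionalPair_mor₂ hT₁₃
  have hCF : IsExceptionalPair K g' := hBC.isExceptionalPair_mor₂ hT₂₃
  have hAD : ∀ n : ℤ, ∀ u : A ⟶ D⟦n⟧, u = 0 := hAB.hom_obj₁_obj₃_shift_eq_zero hT₁₂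
  have hAE : ∀ n : ℤ, ∀ u : A ⟶ E⟦n⟧, u = 0 := hAC.hom_obj₁_obj₃_shift_eq_zero hT₁₃
  have hBF : ∀ n : ℤ, ∀ u : B ⟶ F⟦n⟧, u = 0 := hBC.hom_obj₁_obj₃_shift_eq_zero hT₂₃
  intro i j n hij hmem
  fin_cases i <;> fin_cases j <;>
    simp only [Fin.isValue, Fin.zero_eta, Fin.mk_one, Fin.reduceFinMk, Fin.reduceEq, ne_eq,
      not_true_eq_false, not_false_eq_true, zero_ne_one, one_ne_zero, List.mem_cons,
      List.not_mem_nil, Prod.mk.injEq, true_and, false_and, and_false, and_self,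
      or_self, or_false, false_or] at hij hmem
  · exact hAB.hom_shift_eq_zero n hmem
  · exact hAC.hom_shift_eq_zero n hmem
  · exact hAD n
  · exact hAE n
  · exact hAF n
  · exact hAB.hom_shift_rev_eq_zero n
  · exact hBC.hom_shift_eq_zero n hmem
  · exact hBD.hom_shift_eq_zero n hmem
  · exact hBE n hmem
  · exact hBF n
  · exact hAC.hom_shift_rev_eq_zero n
  · exact hBC.hom_shift_rev_eq_zero n
  · exact hCD n
  · exact hCE.hom_shift_eq_zero n hmem
  · exact hCF.hom_shift_eq_zero n hmem
  · exact hAB.hom_obj₃_obj₁_shift_eq_zero hT₁₂ n hmem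
  · exact hAB.hom_obj₃_obj₂_shift_eq_zero hT₁₂ n
  · exact hDC n
  · exact hom_from_obj₃_shift_eq_zero _ hT₁₂ (hBE n hmem) (hAE (n - 1))
  · exact hom_from_obj₃_shift_eq_zero _ hT₁₂ (hBF n) (hAF (n - 1))
  · exact hAC.hom_obj₃_obj₁_shift_eq_zero hT₁₃ n hmem
  · exact hom_from_obj₃_shift_eq_zero _ hT₁₃ (hBC.hom_shift_rev_eq_zero n)
      (hAB.hom_shift_eq_zero (n - 1) (by omega))
  · exact hAC.hom_obj₃_obj₂_shift_eq_zero hT₁₃ n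
  · exact hom_from_obj₃_shift_eq_zero _ hT₁₃ (hCD n) (hAD (n - 1))
  · exact hom_from_obj₃_shift_eq_zero _ hT₁₃ (hCF.hom_shift_eq_zero n hmem) (hAF (n - 1))
  · exact hom_from_obj₃_shift_eq_zero _ hT₂₃ (hAC.hom_shift_rev_eq_zero n)
      (hAB.hom_shift_rev_eq_zero (n - 1))
  · exact hBC.hom_obj₃_obj₁_shift_eq_zero hT₂₃ n hmem
  · exact hBC.hom_obj₃_obj₂_shift_eq_zero hT₂₃ n
  · exact hom_from_obj₃_shift_eq_zero _ hT₂₃ (hCD n) (hBD.hom_shift_eq_zero (n - 1) (by omega))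
  · exact hFE n

lemma isExceptional_shift (hABC : IsExceptionalTriple K f g)
    (hT₁₂ : Triangle.mk f f' f'' ∈ distTriang S)
    (hT₁₃ : Triangle.mk (f ≫ g) h' h'' ∈ distTriang S)
    (hT₂₃ : Triangle.mk g g' g'' ∈ distTriang S) :
    ∀ (i : Fin 6) (n : ℤ), IsExceptional K (((![A, B, C, D, E, F] : Fin 6 → S) i)⟦n⟧) := by
  intro i n
  fin_cases i
  · exact (hABC.pair₁₂.isExceptional_shift hT₁₂ n).1
  · exact (hABC.pair₁₂.isExceptional_shift hT₁₂ n).2.1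
  · exact (hABC.pair₂₃.isExceptional_shift hT₂₃ n).2.1
  · exact (hABC.pair₁₂.isExceptional_shift hT₁₂ n).2.2
  · exact (hABC.pair₁₃.isExceptional_shift hT₁₃ n).2.2
  · exact (hABC.pair₂₃.isExceptional_shift hT₂₃ n).2.2

variable {k : D ⟶ E} {k' : E ⟶ F}

lemma isHomBasis_cone₁₂_cone₁₃ (hABC : IsExceptionalTriple K f g)
    (hT₁₂ : Triangle.mk f f' f'' ∈ distTriang S)
    (hT₁₃ : Triangle.mk (f ≫ g) h' h'' ∈ distTriang S) (hk : g ≫ h' = f' ≫ k) :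
    IsHomBasis K k := by
  have hBE := hABC.isHomBasis_obj₂_cone₁₃ hT₁₃
  rw [hk] at hBE
  exact ⟨fun h => hBE.1 (by rw [h, comp_zero]), exists_eq_smul_of_mor₂_comp _ hT₁₂ hBE.2
    (hom_shift_zero_iff.mp (hom_shift_one_eq_zero
      (hABC.pair₁₃.hom_obj₁_obj₃_shift_eq_zero hT₁₃ (0 - 1))))⟩

lemma isHomBasis_cone₁₃_cone₂₃ (hABC : IsExceptionalTriple K f g)
    (hT₁₃ : Triangle.mk (f ≫ g) h' h'' ∈ distTriang S)
    (hT₂₃ : Triangle.mk g g' g'' ∈ distTriang S) (hk' : h' ≫ k' = g') :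
    IsHomBasis K k' := by
  have hCF : IsHomBasis K g' := (hABC.pair₂₃.isExceptionalPair_mor₂ hT₂₃).isHomBasis
  rw [← hk'] at hCF
  exact ⟨fun h => hCF.1 (by rw [h, comp_zero]), exists_eq_smul_of_mor₂_comp _ hT₁₃ hCF.2
    (hom_shift_zero_iff.mp
      (hom_shift_one_eq_zero (hABC.hom_obj₁_cone₂₃_shift_eq_zero hT₂₃ (0 - 1))))⟩

lemma isHomBasis_cone₁₃_obj₂_shift (hABC : IsExceptionalTriple K f g)
    (hT₁₃ : Triangle.mk (f ≫ g) h' h'' ∈ distTriang S)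
    (hT₂₃ : Triangle.mk g g' g'' ∈ distTriang S) (hk' : h' ≫ k' = g') :
    IsHomBasis K (k' ≫ g'') := by
  have hEF := hABC.isHomBasis_cone₁₃_cone₂₃ hT₁₃ hT₂₃ hk'
  have hEC := (hABC.pair₁₃.isExceptionalPair_mor₂ hT₁₃).hom_shift_rev_eq_zero
  exact ⟨comp_mor₂_ne_zero _ (rot_of_distTriang _ hT₂₃) hEF.1 (hom_shift_zero_iff.mp (hEC 0)),
    exists_eq_smul_comp_mor₂ _ (rot_of_distTriang _ hT₂₃) hEF.2 (hEC 1)⟩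

lemma isHomBasis_cone₂₃_cone₁₂_shift (hABC : IsExceptionalTriple K f g)
    (hT₁₃ : Triangle.mk (f ≫ g) h' h'' ∈ distTriang S)
    (hT₂₃ : Triangle.mk g g' g'' ∈ distTriang S)
    (hT : Triangle.mk k k' (g'' ≫ f'⟦(1 : ℤ)⟧') ∈ distTriang S) :
    IsHomBasis K (g'' ≫ f'⟦(1 : ℤ)⟧') := by
  have hF := (hABC.pair₂₃.isExceptionalPair_mor₂ hT₂₃).right
  have hFE := hABC.hom_cone₂₃_cone₁₃_shift_eq_zero hT₁₃ hT₂₃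
  refine ⟨mor₂_ne_zero _ (rot_of_distTriang _ hT) hF.not_isZero (hom_shift_zero_iff.mp (hFE 0)),
    fun u => ?_⟩
  obtain ⟨c, hc⟩ := exists_eq_smul_comp_mor₂ _ (rot_of_distTriang _ hT) (p := 𝟙 F)
    hF.isScalarEnd (hFE 1) u
  exact ⟨c, hc.trans (congrArg _ (Category.id_comp _))⟩

end IsExceptionalTriple

end Octahedron

end ExceptionalOctahedron

open ExceptionalOctahedron

/-- Hom computations in `S`: for distinct `X, Y` among the six
indecomposables `A, B, C, D, E, F` (indexed `0, ..., 5`) and `n : ℤ`, the space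
`Hom(X, Y⟦n⟧)` vanishes except in the fourteen listed cases, where it is
one-dimensional, generated by the corresponding structure morphism of the octahedron;
moreover every indecomposable `X⟦n⟧` is exceptional. -/
theorem hom_spaces_computation
    {K : Type*} [Field K] {S : Type*} [Category S] [Preadditive S] [HasZeroObject S]
    [HasShift S ℤ] [∀ n : ℤ, (shiftFunctor S n).Additive] [Pretriangulated S]
    [Linear K S] [HasBinaryBiproducts S]
    {A B C D E F : S}
    (f : A ⟶ B) (g : B ⟶ C) (h : A ⟶ C) (hcomp : f ≫ g = h)
    -- `(A, B, C)` is a strong exceptional sequence with one-dimensional Hom spaces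
    -- and nonzero composition
    (hA : ¬ Limits.IsZero A) (hB : ¬ Limits.IsZero B) (hC : ¬ Limits.IsZero C)
    (hEndA : ∀ u : A ⟶ A, ∃ c : K, u = c • 𝟙 A)
    (hEndB : ∀ u : B ⟶ B, ∃ c : K, u = c • 𝟙 B)
    (hEndC : ∀ u : C ⟶ C, ∃ c : K, u = c • 𝟙 C)
    (hf : f ≠ 0) (hfgen : ∀ u : A ⟶ B, ∃ c : K, u = c • f)
    (hg : g ≠ 0) (hggen : ∀ u : B ⟶ C, ∃ c : K, u = c • g)
    (hh : h ≠ 0) (hhgen : ∀ u : A ⟶ C, ∃ c : K, u = c • h)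
    (hvanAA : ∀ n : ℤ, n ≠ 0 → ∀ u : A ⟶ A⟦n⟧, u = 0)
    (hvanAB : ∀ n : ℤ, n ≠ 0 → ∀ u : A ⟶ B⟦n⟧, u = 0)
    (hvanAC : ∀ n : ℤ, n ≠ 0 → ∀ u : A ⟶ C⟦n⟧, u = 0)
    (hvanBB : ∀ n : ℤ, n ≠ 0 → ∀ u : B ⟶ B⟦n⟧, u = 0)
    (hvanBC : ∀ n : ℤ, n ≠ 0 → ∀ u : B ⟶ C⟦n⟧, u = 0)
    (hvanCC : ∀ n : ℤ, n ≠ 0 → ∀ u : C ⟶ C⟦n⟧, u = 0)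
    (hvanBA : ∀ (n : ℤ) (u : B ⟶ A⟦n⟧), u = 0)
    (hvanCA : ∀ (n : ℤ) (u : C ⟶ A⟦n⟧), u = 0)
    (hvanCB : ∀ (n : ℤ) (u : C ⟶ B⟦n⟧), u = 0)
    -- fullness: `S` is the triangulated envelope of `{A, B, C}`
    (hgen : ∀ P : S → Prop,
      (∀ X Y : S, (X ≅ Y) → P X → P Y) → P A → P B → P C →
      (∀ (X : S) (m : ℤ), P X → P (X⟦m⟧)) →
      (∀ T ∈ distTriang S, P T.obj₁ → P T.obj₂ → P T.obj₃) →
      ∀ X : S, P X)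
    -- the octahedron on `(f, g)`, with the standard notation of the paper
    (f' : B ⟶ D) (f'' : D ⟶ A⟦(1 : ℤ)⟧) (h' : C ⟶ E) (h'' : E ⟶ A⟦(1 : ℤ)⟧)
    (g' : C ⟶ F) (g'' : F ⟶ B⟦(1 : ℤ)⟧) (k : D ⟶ E) (k' : E ⟶ F)
    (l : B ⟶ E) (l' : E ⟶ B⟦(1 : ℤ)⟧)
    (hT1 : Triangle.mk f f' f'' ∈ distTriang S)
    (hT2 : Triangle.mk h h' h'' ∈ distTriang S)
    (hT3 : Triangle.mk g g' g'' ∈ distTriang S)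
    (hT4 : Triangle.mk k k' (g'' ≫ f'⟦(1 : ℤ)⟧') ∈ distTriang S)
    (hl₁ : l = g ≫ h') (hl₂ : l = f' ≫ k)
    (hl'₁ : l' = h'' ≫ f⟦(1 : ℤ)⟧') (hl'₂ : l' = k' ≫ g'')
    (hk₁ : k ≫ h'' = f'') (hk₂ : h' ≫ k' = g') :
    -- vanishing outside the fourteen listed cases
    (∀ (i j : Fin 6) (n : ℤ), i ≠ j →
      (i, j, n) ∉ ([((0 : Fin 6), (1 : Fin 6), (0 : ℤ)), (0, 2, 0), (1, 2, 0), (1, 3, 0),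
        (1, 4, 0), (2, 4, 0), (2, 5, 0), (3, 4, 0), (3, 0, 1), (4, 5, 0), (4, 0, 1),
        (4, 1, 1), (5, 1, 1), (5, 3, 1)] : List (Fin 6 × Fin 6 × ℤ)) →
      ∀ u : (![A, B, C, D, E, F] : Fin 6 → S) i ⟶ ((![A, B, C, D, E, F] : Fin 6 → S) j)⟦n⟧,
        u = 0) ∧
    -- the fourteen one-dimensional Hom spaces, with their generators
    (f ≠ 0 ∧ ∀ u : A ⟶ B, ∃ c : K, u = c • f) ∧
    (h ≠ 0 ∧ ∀ u : A ⟶ C, ∃ c : K, u = c • h) ∧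
    (g ≠ 0 ∧ ∀ u : B ⟶ C, ∃ c : K, u = c • g) ∧
    (f' ≠ 0 ∧ ∀ u : B ⟶ D, ∃ c : K, u = c • f') ∧
    (l ≠ 0 ∧ ∀ u : B ⟶ E, ∃ c : K, u = c • l) ∧
    (h' ≠ 0 ∧ ∀ u : C ⟶ E, ∃ c : K, u = c • h') ∧
    (g' ≠ 0 ∧ ∀ u : C ⟶ F, ∃ c : K, u = c • g') ∧
    (k ≠ 0 ∧ ∀ u : D ⟶ E, ∃ c : K, u = c • k) ∧
    (f'' ≠ 0 ∧ ∀ u : D ⟶ A⟦(1 : ℤ)⟧, ∃ c : K, u = c • f'') ∧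
    (k' ≠ 0 ∧ ∀ u : E ⟶ F, ∃ c : K, u = c • k') ∧
    (h'' ≠ 0 ∧ ∀ u : E ⟶ A⟦(1 : ℤ)⟧, ∃ c : K, u = c • h'') ∧
    (l' ≠ 0 ∧ ∀ u : E ⟶ B⟦(1 : ℤ)⟧, ∃ c : K, u = c • l') ∧
    (g'' ≠ 0 ∧ ∀ u : F ⟶ B⟦(1 : ℤ)⟧, ∃ c : K, u = c • g'') ∧
    (g'' ≫ f'⟦(1 : ℤ)⟧' ≠ 0 ∧
      ∀ u : F ⟶ D⟦(1 : ℤ)⟧, ∃ c : K, u = c • (g'' ≫ f'⟦(1 : ℤ)⟧')) ∧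
    -- every indecomposable `X⟦n⟧` is exceptional
    (∀ (i : Fin 6) (n : ℤ),
      ¬ Limits.IsZero (((![A, B, C, D, E, F] : Fin 6 → S) i)⟦n⟧) ∧
      (∀ u : ((![A, B, C, D, E, F] : Fin 6 → S) i)⟦n⟧ ⟶
          ((![A, B, C, D, E, F] : Fin 6 → S) i)⟦n⟧, ∃ c : K, u = c • 𝟙 _) ∧
      ∀ m : ℤ, m ≠ 0 →
        ∀ u : ((![A, B, C, D, E, F] : Fin 6 → S) i)⟦n⟧ ⟶
          (((![A, B, C, D, E, F] : Fin 6 → S) i)⟦n⟧)⟦m⟧, u = 0) := by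
  subst hcomp hl₁ hl'₂
  have hexA : IsExceptional K A := ⟨hA, hEndA, hvanAA⟩
  have hexB : IsExceptional K B := ⟨hB, hEndB, hvanBB⟩
  have hexC : IsExceptional K C := ⟨hC, hEndC, hvanCC⟩
  have hABC : IsExceptionalTriple K f g :=
    ⟨⟨hexA, hexB, hf, hfgen, hvanAB, hvanBA⟩, ⟨hexB, hexC, hg, hggen, hvanBC, hvanCB⟩,
      ⟨hexA, hexC, hh, hhgen, hvanAC, hvanCA⟩⟩
  refine ⟨hABC.hom_eq_zero_of_notMem hT1 hT2 hT3, ⟨hf, hfgen⟩, ⟨hh, hhgen⟩, ⟨hg, hggen⟩,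
    (hABC.pair₁₂.isExceptionalPair_mor₂ hT1).isHomBasis, hABC.isHomBasis_obj₂_cone₁₃ hT2,
    (hABC.pair₁₃.isExceptionalPair_mor₂ hT2).isHomBasis,
    (hABC.pair₂₃.isExceptionalPair_mor₂ hT3).isHomBasis,
    hABC.isHomBasis_cone₁₂_cone₁₃ hT1 hT2 hl₂, hABC.pair₁₂.isHomBasis_mor₃ hT1,
    hABC.isHomBasis_cone₁₃_cone₂₃ hT2 hT3 hk₂, hABC.pair₁₃.isHomBasis_mor₃ hT2,
    hABC.isHomBasis_cone₁₃_obj₂_shift hT2 hT3 hk₂, hABC.pair₂₃.isHomBasis_mor₃ hT3,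
    hABC.isHomBasis_cone₂₃_cone₁₂_shift hT2 hT3 hT4, fun i n => ?_⟩
  have hX := hABC.isExceptional_shift hT1 hT2 hT3 i n
  exact ⟨hX.not_isZero, hX.isScalarEnd, hX.hom_shift_eq_zero⟩
end

section
/- Let S be a K-linear triangulated category with a full and strong exceptional sequence (A, B, C) as above (one-dimensional Homs, nonzero composition), and extend f, g to an octahedron with standard notation. Then the octahedron is good: the triangles B --l--> E --(k', -h'')^T--> F ⊕ A[1] --(g'', f[1])--> B[1] and B --(g, f')^T--> C ⊕ D --(h', -k)--> E --l'--> B[1] are distinguished. -/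
open CategoryTheory CategoryTheory.Limits CategoryTheory.Pretriangulated

/-!
Each triangle is compared with a distinguished triangle on the same morphism: the cone
`B ⟶ E ⟶ G ⟶ B⟦1⟧` of `l`, resp. the triangle `B ⟶ G ⟶ E ⟶ B⟦1⟧` ending in `l'`. Exactness of the
Hom functors gives maps `θ : F ⊞ A⟦1⟧ ⟶ G`, `ψ : G ⟶ F ⊞ A⟦1⟧` (resp. with `C ⊞ D`) compatible with
the triangle maps, and the exceptional-sequence hypotheses (the Hom spaces involved vanish or are
spanned by `𝟙`, `f`, `g`) force `θ ≫ ψ = 𝟙`. Then `𝟙 - ψ ≫ θ` is an idempotent on `G` killed by the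
two triangle maps at `G`, so it factors through one of them and is zero: `θ` is an isomorphism.
-/

section Shift

variable {C : Type*} [Category C] [HasShift C ℤ]

lemma subsingleton_shift_hom_shift {X Y : C} [Subsingleton (X ⟶ Y)] (n : ℤ) :
    Subsingleton (X⟦n⟧ ⟶ Y⟦n⟧) :=
  (shiftFunctor C n).map_surjective.subsingleton

variable [Preadditive C]

lemma subsingleton_hom_of_shift_zero {X Y : C} (h : ∀ u : X ⟶ Y⟦(0 : ℤ)⟧, u = 0) :
    Subsingleton (X ⟶ Y) :=
  have := subsingleton_of_forall_eq 0 h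
  ((Iso.refl X).homCongr ((shiftFunctorZero C ℤ).app Y).symm).subsingleton

lemma subsingleton_shift_one_hom {X Y : C} (h : ∀ u : X ⟶ Y⟦(-1 : ℤ)⟧, u = 0) :
    Subsingleton (X⟦(1 : ℤ)⟧ ⟶ Y) :=
  have := subsingleton_of_forall_eq 0 h
  Equiv.subsingleton (β := X ⟶ Y⟦(-1 : ℤ)⟧) ((shiftEquiv C (1 : ℤ)).toAdjunction.homEquiv X Y)

variable [∀ n : ℤ, (shiftFunctor C n).Additive]

lemma eq_zero_of_comp_shift_eq_zero {X Y Z : C} {s : Y ⟶ Z}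
    (hs : ∀ x : X ⟶ Y, x ≫ s = 0 → x = 0) (n : ℤ) (x : X⟦n⟧ ⟶ Y⟦n⟧)
    (hx : x ≫ s⟦n⟧' = 0) : x = 0 := by
  obtain ⟨x, rfl⟩ := (shiftFunctor C n).map_surjective x
  rw [← Functor.map_comp, Functor.map_eq_zero_iff] at hx
  rw [hs x hx, Functor.map_zero]

end Shift

section Linear

variable {K : Type*} [DivisionRing K] {C : Type*} [Category C] [Preadditive C] [Linear K C]

lemma eq_zero_of_comp_eq_zero_of_forall_eq_smul {X Y Z : C} {s : X ⟶ Y} {t : Y ⟶ Z}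
    (hs : ∀ x : X ⟶ Y, ∃ c : K, x = c • s) (hst : s ≫ t ≠ 0) (x : X ⟶ Y) (hx : x ≫ t = 0) :
    x = 0 := by
  obtain ⟨c, rfl⟩ := hs x
  rw [Linear.smul_comp, smul_eq_zero] at hx
  rw [hx.resolve_right hst, zero_smul]

lemma eq_zero_of_comp_eq_zero_of_forall_eq_smul' {X Y Z : C} {s : Y ⟶ Z} {t : X ⟶ Y}
    (hs : ∀ x : Y ⟶ Z, ∃ c : K, x = c • s) (hts : t ≫ s ≠ 0) (x : Y ⟶ Z) (hx : t ≫ x = 0) :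
    x = 0 := by
  obtain ⟨c, rfl⟩ := hs x
  rw [Linear.comp_smul, smul_eq_zero] at hx
  rw [hx.resolve_right hts, zero_smul]

end Linear

section Retract

variable {C : Type*} [Category C] [Preadditive C]

lemma comp_eq_id_of_retract {Y G W Z : C} {m : Y ⟶ G} {n : G ⟶ W} {v : Y ⟶ Z} {w : Z ⟶ W}
    (hexm : ∀ x : Y ⟶ G, x ≫ n = 0 → ∃ τ : Y ⟶ Y, x = τ ≫ m)
    (hexn : ∀ {V : C} (x : G ⟶ V), m ≫ x = 0 → ∃ β : W ⟶ V, x = n ≫ β)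
    (hmn : m ≫ n = 0) {θ : Z ⟶ G} {ψ : G ⟶ Z} (hθψ : θ ≫ ψ = 𝟙 Z) (hθn : θ ≫ n = w)
    (hmψ : m ≫ ψ = v) (hvw : v ≫ w = 0) (hv : ∀ τ : Y ⟶ Y, τ ≫ v = 0 → τ = 0)
    (hw : ∀ β : W ⟶ W, w ≫ β = 0 → β = 0) : ψ ≫ θ = 𝟙 G := by
  set e := 𝟙 G - ψ ≫ θ
  have hθe : θ ≫ e = 0 := by simp [e, reassoc_of% hθψ]
  have heψ : e ≫ ψ = 0 := by simp [e, hθψ]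
  have hme : m ≫ e = 0 := by
    obtain ⟨τ, hτ⟩ := hexm (m ≫ e) (by simp [e, reassoc_of% hmψ, hθn, hvw, hmn])
    rw [hτ, hv τ (by rw [← hmψ, ← Category.assoc, ← hτ, Category.assoc, heψ, comp_zero]),
      zero_comp]
  have hen : e ≫ n = 0 := by
    obtain ⟨β, hβ⟩ := hexn (e ≫ n) (by rw [← Category.assoc, hme, zero_comp])
    rw [hβ, hw β (by rw [← hθn, Category.assoc, ← hβ, ← Category.assoc, hθe, zero_comp]),
      comp_zero]
  obtain ⟨β, hβ⟩ := hexn e hme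
  have hee : e ≫ e = e := by
    change (𝟙 G - ψ ≫ θ) ≫ e = e
    rw [Preadditive.sub_comp, Category.assoc, hθe, comp_zero, sub_zero, Category.id_comp]
  have he0 : e = 0 := by
    calc e = e ≫ n ≫ β := by rw [← hβ, hee]
      _ = 0 := by rw [← Category.assoc, hen, zero_comp]
  exact (sub_eq_zero.1 he0).symm

end Retract

namespace CategoryTheory.Pretriangulated

variable {C : Type*} [Category C] [Preadditive C] [HasZeroObject C] [HasShift C ℤ]
  [∀ n : ℤ, (shiftFunctor C n).Additive] [Pretriangulated C]

lemma eq_zero_of_mor₂_comp_eq_zero {X Y Z W : C} {u : X ⟶ Y} {v : Y ⟶ Z} {w : Z ⟶ X⟦(1 : ℤ)⟧}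
    (hT : Triangle.mk u v w ∈ distTriang C) [Subsingleton (X⟦(1 : ℤ)⟧ ⟶ W)] {x : Z ⟶ W}
    (hx : v ≫ x = 0) : x = 0 := by
  obtain ⟨y, rfl⟩ : ∃ y : X⟦(1 : ℤ)⟧ ⟶ W, x = w ≫ y := Triangle.yoneda_exact₃ _ hT x hx
  rw [Subsingleton.elim y 0, comp_zero]

lemma eq_zero_of_comp_mor₂_eq_zero {X Y Z W : C} {u : X ⟶ Y} {v : Y ⟶ Z} {w : Z ⟶ X⟦(1 : ℤ)⟧}
    (hT : Triangle.mk u v w ∈ distTriang C) [Subsingleton (W ⟶ X)] {x : W ⟶ Y}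
    (hx : x ≫ v = 0) : x = 0 := by
  obtain ⟨y, rfl⟩ : ∃ y : W ⟶ X, x = y ≫ u := Triangle.coyoneda_exact₂ _ hT x hx
  rw [Subsingleton.elim y 0, zero_comp]

lemma eq_zero_of_comp_mor₃_eq_zero {X Y Z W : C} {u : X ⟶ Y} {v : Y ⟶ Z} {w : Z ⟶ X⟦(1 : ℤ)⟧}
    (hT : Triangle.mk u v w ∈ distTriang C) [Subsingleton (W ⟶ Y)] {x : W ⟶ Z}
    (hx : x ≫ w = 0) : x = 0 := by
  obtain ⟨y, rfl⟩ : ∃ y : W ⟶ Y, x = y ≫ v := Triangle.coyoneda_exact₃ _ hT x hx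
  rw [Subsingleton.elim y 0, zero_comp]

lemma subsingleton_hom_obj₃ {X Y Z W : C} {u : X ⟶ Y} {v : Y ⟶ Z} {w : Z ⟶ X⟦(1 : ℤ)⟧}
    (hT : Triangle.mk u v w ∈ distTriang C) [Subsingleton (W ⟶ Y)]
    (h : ∀ x : W ⟶ X⟦(1 : ℤ)⟧, x ≫ u⟦(1 : ℤ)⟧' = 0 → x = 0) : Subsingleton (W ⟶ Z) := by
  refine subsingleton_of_forall_eq 0 fun x => eq_zero_of_comp_mor₃_eq_zero hT (h _ ?_)
  rw [Category.assoc, show w ≫ u⟦(1 : ℤ)⟧' = 0 from comp_distTriang_mor_zero₃₁ _ hT, comp_zero]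

lemma subsingleton_obj₃_hom {X Y Z W : C} {u : X ⟶ Y} {v : Y ⟶ Z} {w : Z ⟶ X⟦(1 : ℤ)⟧}
    (hT : Triangle.mk u v w ∈ distTriang C) [Subsingleton (X⟦(1 : ℤ)⟧ ⟶ W)]
    (h : ∀ x : Y ⟶ W, u ≫ x = 0 → x = 0) : Subsingleton (Z ⟶ W) := by
  refine subsingleton_of_forall_eq 0 fun x => eq_zero_of_mor₂_comp_eq_zero hT (h _ ?_)
  rw [← Category.assoc, show u ≫ v = 0 from comp_distTriang_mor_zero₁₂ _ hT, zero_comp]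

lemma distinguished_of_retract₃ {X Y Z G : C} {u : X ⟶ Y} {v : Y ⟶ Z} {w : Z ⟶ X⟦(1 : ℤ)⟧}
    {m : Y ⟶ G} {n : G ⟶ X⟦(1 : ℤ)⟧} (hT : Triangle.mk u m n ∈ distTriang C)
    {θ : Z ⟶ G} {ψ : G ⟶ Z} (hθψ : θ ≫ ψ = 𝟙 Z) (hθn : θ ≫ n = w) (hmψ : m ≫ ψ = v)
    (hvw : v ≫ w = 0) (hv : ∀ τ : Y ⟶ Y, τ ≫ v = 0 → τ = 0)
    (hw : ∀ β : X⟦(1 : ℤ)⟧ ⟶ X⟦(1 : ℤ)⟧, w ≫ β = 0 → β = 0) :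
    Triangle.mk u v w ∈ distTriang C := by
  have hψθ : ψ ≫ θ = 𝟙 G := comp_eq_id_of_retract (Triangle.coyoneda_exact₃ _ hT)
    (fun x => Triangle.yoneda_exact₃ _ hT x) (comp_distTriang_mor_zero₂₃ _ hT) hθψ hθn hmψ hvw
    hv hw
  refine isomorphic_distinguished _ hT _
    (Triangle.isoMk _ _ (Iso.refl _) (Iso.refl _) ⟨θ, ψ, hθψ, hψθ⟩ ?_ ?_ ?_)
  · exact (Category.comp_id u).trans (Category.id_comp u).symm
  · show v ≫ θ = 𝟙 Y ≫ m
    rw [← hmψ, Category.assoc, hψθ, Category.comp_id, Category.id_comp]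
  · show w ≫ (𝟙 X)⟦(1 : ℤ)⟧' = θ ≫ n
    rw [Functor.map_id, Category.comp_id, hθn]

lemma distinguished_of_retract₂ {X Y Z G : C} {v : X ⟶ Y} {w : Y ⟶ Z} {u : Z ⟶ X⟦(1 : ℤ)⟧}
    {m : X ⟶ G} {n : G ⟶ Z} (hT : Triangle.mk m n u ∈ distTriang C)
    {θ : Y ⟶ G} {ψ : G ⟶ Y} (hθψ : θ ≫ ψ = 𝟙 Y) (hθn : θ ≫ n = w) (hmψ : m ≫ ψ = v)
    (hvw : v ≫ w = 0) (hv : ∀ σ : X ⟶ X, σ ≫ v = 0 → σ = 0)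
    (hw : ∀ β : Z ⟶ Z, w ≫ β = 0 → β = 0) :
    Triangle.mk v w u ∈ distTriang C := by
  have hψθ : ψ ≫ θ = 𝟙 G := comp_eq_id_of_retract (Triangle.coyoneda_exact₂ _ hT)
    (fun x => Triangle.yoneda_exact₂ _ hT x) (comp_distTriang_mor_zero₁₂ _ hT) hθψ hθn hmψ hvw
    hv hw
  refine isomorphic_distinguished _ hT _
    (Triangle.isoMk _ _ (Iso.refl _) ⟨θ, ψ, hθψ, hψθ⟩ (Iso.refl _) ?_ ?_ ?_)
  · show v ≫ θ = 𝟙 X ≫ m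
    rw [← hmψ, Category.assoc, hψθ, Category.comp_id, Category.id_comp]
  · show w ≫ 𝟙 Z = θ ≫ n
    rw [Category.comp_id, hθn]
  · show u ≫ (𝟙 X)⟦(1 : ℤ)⟧' = 𝟙 Z ≫ u
    rw [Functor.map_id, Category.comp_id, Category.id_comp]

section Octahedron

variable {S : Type*} [Category S] [Preadditive S] [HasZeroObject S] [HasShift S ℤ]
  [∀ n : ℤ, (shiftFunctor S n).Additive] [Pretriangulated S] [HasBinaryBiproducts S]
  {A B C D E F : S} {f : A ⟶ B} {g : B ⟶ C} {h : A ⟶ C} {f' : B ⟶ D} {f'' : D ⟶ A⟦(1 : ℤ)⟧}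
  {h' : C ⟶ E} {h'' : E ⟶ A⟦(1 : ℤ)⟧} {g' : C ⟶ F} {g'' : F ⟶ B⟦(1 : ℤ)⟧} {k : D ⟶ E}
  {k' : E ⟶ F} {l : B ⟶ E} {l' : E ⟶ B⟦(1 : ℤ)⟧}

lemma exists_biprod_retract_cone {G : S} {m : E ⟶ G} {n : G ⟶ B⟦(1 : ℤ)⟧}
    (hTl : Triangle.mk l m n ∈ distTriang S) (hT2 : Triangle.mk h h' h'' ∈ distTriang S)
    (hT3 : Triangle.mk g g' g'' ∈ distTriang S) (hcomp : f ≫ g = h) (hl : l = g ≫ h')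
    (hk₂ : h' ≫ k' = g') [Subsingleton (B⟦(1 : ℤ)⟧ ⟶ F)] [Subsingleton (F ⟶ A⟦(1 : ℤ)⟧)]
    [Subsingleton (A⟦(1 : ℤ)⟧ ⟶ F)]
    (hAh : ∀ x : A⟦(1 : ℤ)⟧ ⟶ A⟦(1 : ℤ)⟧, x ≫ h⟦(1 : ℤ)⟧' = 0 → x = 0) :
    ∃ (θ : F ⊞ A⟦(1 : ℤ)⟧ ⟶ G) (ψ : G ⟶ F ⊞ A⟦(1 : ℤ)⟧), θ ≫ ψ = 𝟙 _ ∧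
      θ ≫ n = biprod.desc g'' (f⟦(1 : ℤ)⟧') ∧ m ≫ ψ = biprod.lift k' (-h'') := by
  have hhh' : h ≫ h' = 0 := comp_distTriang_mor_zero₁₂ _ hT2
  have hgg' : g ≫ g' = 0 := comp_distTriang_mor_zero₁₂ _ hT3
  obtain ⟨φ₁, hφ₁m, hφ₁n⟩ : ∃ φ₁ : F ⟶ G, g' ≫ φ₁ = h' ≫ m ∧ g'' ≫ (𝟙 B)⟦(1 : ℤ)⟧' = φ₁ ≫ n :=
    complete_distinguished_triangle_morphism _ _ hT3 hTl (𝟙 B) h' (hl ▸ (Category.id_comp _).symm)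
  obtain ⟨φ₂, hφ₂n⟩ : ∃ φ₂ : A⟦(1 : ℤ)⟧ ⟶ G, f⟦(1 : ℤ)⟧' = φ₂ ≫ n :=
    Triangle.coyoneda_exact₁ _ hTl _ (by
      show f⟦(1 : ℤ)⟧' ≫ l⟦(1 : ℤ)⟧' = 0
      simp [← Functor.map_comp, hl, reassoc_of% hcomp, hhh'])
  obtain ⟨ψ₁, hmψ₁⟩ : ∃ ψ₁ : G ⟶ F, k' = m ≫ ψ₁ :=
    Triangle.yoneda_exact₂ _ hTl k' (by
      show l ≫ k' = 0
      simp [hl, hk₂, hgg'])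
  obtain ⟨ψ₂, hmψ₂, hψ₂h⟩ : ∃ ψ₂ : G ⟶ A⟦(1 : ℤ)⟧,
      m ≫ ψ₂ = 𝟙 E ≫ h'' ∧ n ≫ g⟦(1 : ℤ)⟧' = ψ₂ ≫ (-h⟦(1 : ℤ)⟧') :=
    complete_distinguished_triangle_morphism _ _ hTl (rot_of_distTriang _ hT2) g (𝟙 E)
      (hl ▸ Category.comp_id _)
  have h₁₁ : φ₁ ≫ ψ₁ = 𝟙 F := sub_eq_zero.1 <|
    eq_zero_of_mor₂_comp_eq_zero hT3 (by simp [reassoc_of% hφ₁m, ← hmψ₁, hk₂])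
  have hψ₂h' : ψ₂ ≫ h⟦(1 : ℤ)⟧' = -(n ≫ g⟦(1 : ℤ)⟧') := by
    rw [hψ₂h, Preadditive.comp_neg, neg_neg]
  have h₂₂ : φ₂ ≫ ψ₂ = -𝟙 _ := eq_neg_of_add_eq_zero_left <| hAh _ <| by
    rw [Preadditive.add_comp, Category.assoc, hψ₂h', Preadditive.comp_neg, ← reassoc_of% hφ₂n,
      ← Functor.map_comp, hcomp, Category.id_comp, neg_add_cancel]
  refine ⟨biprod.desc φ₁ φ₂, biprod.lift ψ₁ (-ψ₂), ?_, ?_, ?_⟩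
  · ext <;> simp [h₁₁, h₂₂, Subsingleton.elim (φ₁ ≫ ψ₂) 0, Subsingleton.elim (φ₂ ≫ ψ₁) 0]
  · ext <;> simp [← hφ₁n, ← hφ₂n]
  · ext <;> simp [← hmψ₁, hmψ₂]

lemma octahedron_distinguished_biprod₃ (hT2 : Triangle.mk h h' h'' ∈ distTriang S)
    (hT3 : Triangle.mk g g' g'' ∈ distTriang S) (hcomp : f ≫ g = h) (hl : l = g ≫ h')
    (hl'₁ : l' = h'' ≫ f⟦(1 : ℤ)⟧') (hl'₂ : l' = k' ≫ g'') (hk₂ : h' ≫ k' = g')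
    [Subsingleton (E ⟶ B)] [Subsingleton (C⟦(1 : ℤ)⟧ ⟶ B⟦(1 : ℤ)⟧)]
    [Subsingleton (B⟦(1 : ℤ)⟧ ⟶ F)] [Subsingleton (F ⟶ A⟦(1 : ℤ)⟧)]
    [Subsingleton (A⟦(1 : ℤ)⟧ ⟶ F)]
    (hAh : ∀ x : A⟦(1 : ℤ)⟧ ⟶ A⟦(1 : ℤ)⟧, x ≫ h⟦(1 : ℤ)⟧' = 0 → x = 0) :
    Triangle.mk l (biprod.lift k' (-h'')) (biprod.desc g'' (f⟦(1 : ℤ)⟧')) ∈ distTriang S := by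
  obtain ⟨G, m, n, hTl⟩ := distinguished_cocone_triangle l
  have hT3' : Triangle.mk g' g'' (-g⟦(1 : ℤ)⟧') ∈ distTriang S := rot_of_distTriang _ hT3
  obtain ⟨θ, ψ, hθψ, hθn, hmψ⟩ := exists_biprod_retract_cone hTl hT2 hT3 hcomp hl hk₂ hAh
  refine distinguished_of_retract₃ hTl hθψ hθn hmψ (by simp [← hl'₁, ← hl'₂]) ?_ ?_
  · intro τ hτ
    have hτk' : τ ≫ k' = 0 := by simpa using (hτ =≫ biprod.fst)
    have hτh'' : τ ≫ h'' = 0 := by simpa using (hτ =≫ biprod.snd)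
    obtain ⟨y, rfl⟩ : ∃ y : E ⟶ C, τ = y ≫ h' := Triangle.coyoneda_exact₃ _ hT2 τ hτh''
    have hy : y = 0 := eq_zero_of_comp_mor₂_eq_zero hT3 <| by
      rw [← hk₂, ← Category.assoc]
      exact hτk'
    rw [hy, zero_comp]
  · intro β hβ
    exact eq_zero_of_mor₂_comp_eq_zero hT3' <| by simpa using (biprod.inl ≫= hβ)

lemma exists_biprod_retract_cocone {G : S} {m : B ⟶ G} {n : G ⟶ E}
    (hTl : Triangle.mk m n l' ∈ distTriang S) (hT1 : Triangle.mk f f' f'' ∈ distTriang S)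
    (hT2 : Triangle.mk h h' h'' ∈ distTriang S) (hT3 : Triangle.mk g g' g'' ∈ distTriang S)
    (hl'₁ : l' = h'' ≫ f⟦(1 : ℤ)⟧') (hl'₂ : l' = k' ≫ g'') (hk₁ : k ≫ h'' = f'')
    (hk₂ : h' ≫ k' = g') [Subsingleton (C ⟶ B)] [Subsingleton (D ⟶ B)]
    [Subsingleton (C ⟶ D)] [Subsingleton (D ⟶ C)] :
    ∃ (θ : C ⊞ D ⟶ G) (ψ : G ⟶ C ⊞ D), θ ≫ ψ = 𝟙 _ ∧
      θ ≫ n = biprod.desc h' (-k) ∧ m ≫ ψ = biprod.lift g f' := by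
  have hh'h'' : h' ≫ h'' = 0 := comp_distTriang_mor_zero₂₃ _ hT2
  have hf''f : f'' ≫ f⟦(1 : ℤ)⟧' = 0 := comp_distTriang_mor_zero₃₁ _ hT1
  obtain ⟨u₁, hu₁⟩ : ∃ u₁ : C ⟶ G, h' = u₁ ≫ n := Triangle.coyoneda_exact₃ _ hTl h' (by
    show h' ≫ l' = 0
    rw [hl'₁, reassoc_of% hh'h'', zero_comp])
  obtain ⟨u₂, hu₂⟩ : ∃ u₂ : D ⟶ G, k = u₂ ≫ n := Triangle.coyoneda_exact₃ _ hTl k (by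
    show k ≫ l' = 0
    rw [hl'₁, reassoc_of% hk₁, hf''f])
  obtain ⟨v₁, hmv₁, hv₁⟩ : ∃ v₁ : G ⟶ C, m ≫ v₁ = 𝟙 B ≫ g ∧ n ≫ k' = v₁ ≫ g' :=
    complete_distinguished_triangle_morphism₂ _ _ hTl hT3 (𝟙 B) k' (by
      show l' ≫ (𝟙 B)⟦(1 : ℤ)⟧' = k' ≫ g''
      rw [Functor.map_id, Category.comp_id, hl'₂])
  obtain ⟨v₂, hmv₂, hv₂⟩ : ∃ v₂ : G ⟶ D, m ≫ v₂ = 𝟙 B ≫ f' ∧ n ≫ (-h'') = v₂ ≫ f'' :=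
    complete_distinguished_triangle_morphism₂ _ _ hTl (rot_of_distTriang _ hT1) (𝟙 B) (-h'') (by
      show l' ≫ (𝟙 B)⟦(1 : ℤ)⟧' = (-h'') ≫ (-f⟦(1 : ℤ)⟧')
      rw [Functor.map_id, Category.comp_id, Preadditive.neg_comp_neg, hl'₁])
  have h₁₁ : u₁ ≫ v₁ = 𝟙 C := sub_eq_zero.1 <| eq_zero_of_comp_mor₂_eq_zero hT3 <| by
    rw [Preadditive.sub_comp, Category.assoc, ← hv₁, ← reassoc_of% hu₁, hk₂, Category.id_comp,
      sub_self]
  have h₂₂ : u₂ ≫ v₂ = -𝟙 D := eq_neg_of_add_eq_zero_left <|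
    eq_zero_of_comp_mor₃_eq_zero hT1 <| by
      rw [Preadditive.add_comp, Category.assoc, ← hv₂, Preadditive.comp_neg, Preadditive.comp_neg,
        ← reassoc_of% hu₂, hk₁, Category.id_comp, neg_add_cancel]
  refine ⟨biprod.desc u₁ (-u₂), biprod.lift v₁ v₂, ?_, ?_, ?_⟩
  · ext <;> simp [h₁₁, h₂₂, Subsingleton.elim (u₁ ≫ v₂) 0, Subsingleton.elim (u₂ ≫ v₁) 0]
  · ext <;> simp [← hu₁, ← hu₂]
  · ext <;> simp [hmv₁, hmv₂]

lemma octahedron_distinguished_biprod₂ (hT1 : Triangle.mk f f' f'' ∈ distTriang S)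
    (hT2 : Triangle.mk h h' h'' ∈ distTriang S) (hT3 : Triangle.mk g g' g'' ∈ distTriang S)
    (hl : g ≫ h' = f' ≫ k) (hl'₁ : l' = h'' ≫ f⟦(1 : ℤ)⟧') (hl'₂ : l' = k' ≫ g'')
    (hk₁ : k ≫ h'' = f'') (hk₂ : h' ≫ k' = g')
    [Subsingleton (B ⟶ A)] [Subsingleton (C ⟶ B)] [Subsingleton (D ⟶ B)]
    [Subsingleton (C ⟶ D)] [Subsingleton (D ⟶ C)] [Subsingleton (A⟦(1 : ℤ)⟧ ⟶ E)] :
    Triangle.mk (biprod.lift g f') (biprod.desc h' (-k)) l' ∈ distTriang S := by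
  obtain ⟨G, m, n, hTl⟩ := distinguished_cocone_triangle₂ l'
  obtain ⟨θ, ψ, hθψ, hθn, hmψ⟩ :=
    exists_biprod_retract_cocone hTl hT1 hT2 hT3 hl'₁ hl'₂ hk₁ hk₂
  refine distinguished_of_retract₂ hTl hθψ hθn hmψ (by simp [hl]) ?_ ?_
  · intro σ hσ
    exact eq_zero_of_comp_mor₂_eq_zero hT1 <| by simpa using (hσ =≫ biprod.snd)
  · intro β hβ
    exact eq_zero_of_mor₂_comp_eq_zero hT2 <| by simpa using (biprod.inl ≫= hβ)

end Octahedron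

end CategoryTheory.Pretriangulated

/-- in a `K`-linear triangulated category `S` with a full and strong
exceptional sequence `(A, B, C)` with one-dimensional Hom spaces and nonzero
composition, any octahedron extending `f, g` is good: the two triangles
`B --l--> E --(k', -h'')ᵀ--> F ⊕ A[1] --(g'', f[1])--> B[1]` and
`B --(g, f')ᵀ--> C ⊕ D --(h', -k)--> E --l'--> B[1]` are distinguished. -/
theorem octahedron_is_good
    {K : Type*} [Field K] {S : Type*} [Category S] [Preadditive S] [HasZeroObject S]
    [HasShift S ℤ] [∀ n : ℤ, (shiftFunctor S n).Additive] [Pretriangulated S]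
    [Linear K S] [HasBinaryBiproducts S]
    {A B C D E F : S}
    (f : A ⟶ B) (g : B ⟶ C) (h : A ⟶ C) (hcomp : f ≫ g = h)
    -- `(A, B, C)` is a strong exceptional sequence with one-dimensional Hom spaces
    -- and nonzero composition
    (hA : ¬ Limits.IsZero A) (hB : ¬ Limits.IsZero B) (hC : ¬ Limits.IsZero C)
    (hEndA : ∀ u : A ⟶ A, ∃ c : K, u = c • 𝟙 A)
    (hEndB : ∀ u : B ⟶ B, ∃ c : K, u = c • 𝟙 B)
    (hEndC : ∀ u : C ⟶ C, ∃ c : K, u = c • 𝟙 C)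
    (hf : f ≠ 0) (hfgen : ∀ u : A ⟶ B, ∃ c : K, u = c • f)
    (hg : g ≠ 0) (hggen : ∀ u : B ⟶ C, ∃ c : K, u = c • g)
    (hh : h ≠ 0) (hhgen : ∀ u : A ⟶ C, ∃ c : K, u = c • h)
    (hvanAA : ∀ n : ℤ, n ≠ 0 → ∀ u : A ⟶ A⟦n⟧, u = 0)
    (hvanAB : ∀ n : ℤ, n ≠ 0 → ∀ u : A ⟶ B⟦n⟧, u = 0)
    (hvanAC : ∀ n : ℤ, n ≠ 0 → ∀ u : A ⟶ C⟦n⟧, u = 0)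
    (hvanBB : ∀ n : ℤ, n ≠ 0 → ∀ u : B ⟶ B⟦n⟧, u = 0)
    (hvanBC : ∀ n : ℤ, n ≠ 0 → ∀ u : B ⟶ C⟦n⟧, u = 0)
    (hvanCC : ∀ n : ℤ, n ≠ 0 → ∀ u : C ⟶ C⟦n⟧, u = 0)
    (hvanBA : ∀ (n : ℤ) (u : B ⟶ A⟦n⟧), u = 0)
    (hvanCA : ∀ (n : ℤ) (u : C ⟶ A⟦n⟧), u = 0)
    (hvanCB : ∀ (n : ℤ) (u : C ⟶ B⟦n⟧), u = 0)
    -- fullness: `S` is the triangulated envelope of `{A, B, C}`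
    (hgen : ∀ P : S → Prop,
      (∀ X Y : S, (X ≅ Y) → P X → P Y) → P A → P B → P C →
      (∀ (X : S) (m : ℤ), P X → P (X⟦m⟧)) →
      (∀ T ∈ distTriang S, P T.obj₁ → P T.obj₂ → P T.obj₃) →
      ∀ X : S, P X)
    -- the octahedron on `(f, g)`, with the standard notation of the paper
    (f' : B ⟶ D) (f'' : D ⟶ A⟦(1 : ℤ)⟧) (h' : C ⟶ E) (h'' : E ⟶ A⟦(1 : ℤ)⟧)
    (g' : C ⟶ F) (g'' : F ⟶ B⟦(1 : ℤ)⟧) (k : D ⟶ E) (k' : E ⟶ F)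
    (l : B ⟶ E) (l' : E ⟶ B⟦(1 : ℤ)⟧)
    (hT1 : Triangle.mk f f' f'' ∈ distTriang S)
    (hT2 : Triangle.mk h h' h'' ∈ distTriang S)
    (hT3 : Triangle.mk g g' g'' ∈ distTriang S)
    (hT4 : Triangle.mk k k' (g'' ≫ f'⟦(1 : ℤ)⟧') ∈ distTriang S)
    (hl₁ : l = g ≫ h') (hl₂ : l = f' ≫ k)
    (hl'₁ : l' = h'' ≫ f⟦(1 : ℤ)⟧') (hl'₂ : l' = k' ≫ g'')
    (hk₁ : k ≫ h'' = f'') (hk₂ : h' ≫ k' = g') :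
    (Triangle.mk l (biprod.lift k' (-h'')) (biprod.desc g'' (f⟦(1 : ℤ)⟧'))
      ∈ distTriang S) ∧
    (Triangle.mk (biprod.lift g f') (biprod.desc h' (-k)) l' ∈ distTriang S) := by
  have hBA : Subsingleton (B ⟶ A) := subsingleton_hom_of_shift_zero (hvanBA 0)
  have hCB : Subsingleton (C ⟶ B) := subsingleton_hom_of_shift_zero (hvanCB 0)
  have hCA₁ : Subsingleton (C ⟶ A⟦(1 : ℤ)⟧) := subsingleton_of_forall_eq 0 (hvanCA 1)
  have hA₁B : Subsingleton (A⟦(1 : ℤ)⟧ ⟶ B) := subsingleton_shift_one_hom (hvanAB (-1) (by simp))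
  have hA₁C : Subsingleton (A⟦(1 : ℤ)⟧ ⟶ C) := subsingleton_shift_one_hom (hvanAC (-1) (by simp))
  have hB₁C : Subsingleton (B⟦(1 : ℤ)⟧ ⟶ C) := subsingleton_shift_one_hom (hvanBC (-1) (by simp))
  have hB₁A₁ := subsingleton_shift_hom_shift (X := B) (Y := A) 1
  have hC₁B₁ := subsingleton_shift_hom_shift (X := C) (Y := B) 1
  have hfg : f ≫ g ≠ 0 := hcomp ▸ hh
  have hAh : ∀ x : A⟦(1 : ℤ)⟧ ⟶ A⟦(1 : ℤ)⟧, x ≫ h⟦(1 : ℤ)⟧' = 0 → x = 0 :=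
    eq_zero_of_comp_shift_eq_zero
      (eq_zero_of_comp_eq_zero_of_forall_eq_smul hEndA (by rwa [Category.id_comp])) 1
  have hA₁E : Subsingleton (A⟦(1 : ℤ)⟧ ⟶ E) := subsingleton_hom_obj₃ hT2 hAh
  have hB₁F : Subsingleton (B⟦(1 : ℤ)⟧ ⟶ F) := subsingleton_hom_obj₃ hT3 <|
    eq_zero_of_comp_shift_eq_zero
      (eq_zero_of_comp_eq_zero_of_forall_eq_smul hEndB (by rwa [Category.id_comp])) 1
  have hA₁F : Subsingleton (A⟦(1 : ℤ)⟧ ⟶ F) := subsingleton_hom_obj₃ hT3 <|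
    eq_zero_of_comp_shift_eq_zero (eq_zero_of_comp_eq_zero_of_forall_eq_smul hfgen hfg) 1
  have hCD : Subsingleton (C ⟶ D) := subsingleton_hom_obj₃ hT1 fun x _ => Subsingleton.elim x 0
  have hEB : Subsingleton (E ⟶ B) := subsingleton_obj₃_hom hT2 fun x _ => Subsingleton.elim x 0
  have hFA₁ : Subsingleton (F ⟶ A⟦(1 : ℤ)⟧) :=
    subsingleton_obj₃_hom hT3 fun x _ => Subsingleton.elim x 0
  have hDC : Subsingleton (D ⟶ C) :=
    subsingleton_obj₃_hom hT1 (eq_zero_of_comp_eq_zero_of_forall_eq_smul' hggen hfg)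
  have hDB : Subsingleton (D ⟶ B) := subsingleton_obj₃_hom hT1 <|
    eq_zero_of_comp_eq_zero_of_forall_eq_smul' hEndB (by rwa [Category.comp_id])
  exact ⟨octahedron_distinguished_biprod₃ hT2 hT3 hcomp hl₁ hl'₁ hl'₂ hk₂ hAh,
    octahedron_distinguished_biprod₂ hT1 hT2 hT3 (hl₁.symm.trans hl₂) hl'₁ hl'₂ hk₁ hk₂⟩
end
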